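/- arXiv:1912.06336 — 6 statements merged into one kernel-verified Lean document; each statement's English description precedes it below -/
import Mathlib

section
/- Let m, n ≥ 1, let x₁, x₂ ∈ 𝔽₂ⁿ with x₁ ≠ x₂, and let y₁, y₂ ∈ 𝔽₂ᵐ. Then the number of pairs (t, b) ∈ 𝔽₂^{m+n−1} × 𝔽₂ᵐ such that h_{t,b}(x₁) = y₁ and h_{t,b}(x₂) = y₂ equals 2^{n−1}; equivalently, if (t, b) is chosen uniformly at random, then Pr_{t,b}[h_{t,b}(x₁) = y₁ ∧ h_{t,b}(x₂) = y₂] = 1/2^{2m} (pairwise independence of the Toeplitz hash family). -/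
/-!
Identify `t` with the polynomial `T = ∑ tᵣ Xʳ` and `z` with `Z = ∑ zⱼ Xʲ`: row `i` of `A_t z` is
the coefficient of `X^(i+n-1)` in `T * Z`. For `z ≠ 0`, dividing `X^(n-1) * ∑ wᵢ Xⁱ` by `Z` gives a
quotient `T` such that `T * Z` has coefficients `w` in that window, because the remainder has
degree `< deg Z ≤ n - 1`; so `t ↦ A_t z` is onto. Hence the additive map
`(t, b) ↦ (h_{t,b}(x₁), h_{t,b}(x₂))` is onto (solve `A_t (x₂ - x₁) = y₂ - y₁`, then choose `b`), and
all its fibres have size `2^(n+2m-1) / 2^(2m)`.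
-/

/-- The `m × n` Toeplitz matrix over `𝔽₂` determined by the vector
`t ∈ 𝔽₂^{m+n-1}` recording its first row and first column:
entry `(i, j)` is `t (i + (n-1) - j)`, so that `a_{i,j} = a_{i+1,j+1}`. -/
def toeplitz (m n : ℕ) (t : Fin (m + n - 1) → ZMod 2) :
    Matrix (Fin m) (Fin n) (ZMod 2) :=
  Matrix.of fun i j => t ⟨i.val + (n - 1) - j.val, by
    have hi := i.isLt; have hj := j.isLt; omega⟩

/-- The Toeplitz hash function `h_{t,b}(x) = A_t x + b`. -/
def hashTB (m n : ℕ) (t : Fin (m + n - 1) → ZMod 2) (b : Fin m → ZMod 2)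
    (x : Fin n → ZMod 2) : Fin m → ZMod 2 :=
  (toeplitz m n t).mulVec x + b

open Finset Polynomial

lemma AddMonoidHom.card_mul_card_fiber_of_surjective {G H : Type*} [AddGroup G] [Fintype G]
    [AddMonoid H] [Fintype H] [DecidableEq H] {f : G →+ H} (hf : Function.Surjective f)
    (y : H) : Fintype.card H * #{g : G | f g = y} = Fintype.card G := by
  calc Fintype.card H * #{g : G | f g = y} = ∑ z : H, #{g : G | f g = z} := by
        rw [sum_congr rfl fun z _ ↦ card_fiber_eq_of_mem_range f (hf z) (hf y), sum_const,
          card_univ, smul_eq_mul]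
    _ = Fintype.card G := (card_eq_sum_card_fiberwise fun g _ ↦ mem_univ (f g)).symm

lemma toeplitz_add (m n : ℕ) (t₁ t₂ : Fin (m + n - 1) → ZMod 2) :
    toeplitz m n (t₁ + t₂) = toeplitz m n t₁ + toeplitz m n t₂ := by
  ext i j; simp [toeplitz]

lemma toeplitz_mulVec_apply_eq_coeff (m n : ℕ) (T : (ZMod 2)[X]) (z : Fin n → ZMod 2)
    (i : Fin m) :
    (toeplitz m n fun r ↦ T.coeff r).mulVec z i = (T * ofFn n z).coeff (i + (n - 1)) := by
  rw [Matrix.mulVec, dotProduct, ofFn_eq_sum_monomial, mul_sum, finsetSum_coeff]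
  refine sum_congr rfl fun j _ ↦ ?_
  obtain ⟨d, hd⟩ : ∃ d, (i : ℕ) + (n - 1) = d + j := ⟨i + (n - 1) - j, by omega⟩
  rw [hd, coeff_mul_monomial, toeplitz, Matrix.of_apply]
  exact congrArg (T.coeff · * z j) (Nat.sub_eq_of_eq_add hd)

lemma toeplitz_mulVec_surjective (m n : ℕ) {z : Fin n → ZMod 2} (hz : z ≠ 0) :
    Function.Surjective fun t ↦ (toeplitz m n t).mulVec z := by
  intro w
  set Z := ofFn n z
  set W : (ZMod 2)[X] := X ^ (n - 1) * ofFn m w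
  have hZ : Z ≠ 0 := (injective_ofFn n).ne_iff' (map_zero _) |>.mpr hz
  have hn : 1 ≤ n := Nat.one_le_iff_ne_zero.mpr (ne_zero_of_ofFn_ne_zero hZ)
  refine ⟨fun r ↦ (W / Z).coeff r, funext fun i ↦ ?_⟩
  have hrem : (W % Z).degree < ↑((i : ℕ) + (n - 1)) :=
    calc (W % Z).degree < Z.degree := degree_mod_lt W hZ
      _ ≤ ↑(n - 1) := degree_le_of_natDegree_le (Nat.le_sub_one_of_lt (ofFn_natDegree_lt hn z))
      _ ≤ _ := by exact_mod_cast Nat.le_add_left _ _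
  have hdiv : W / Z * Z = W - W % Z := eq_sub_of_add_eq' (EuclideanDomain.mod_add_div' W Z)
  dsimp only
  rw [toeplitz_mulVec_apply_eq_coeff, hdiv, coeff_sub, coeff_eq_zero_of_degree_lt hrem, sub_zero,
    coeff_X_pow_mul, ofFn_coeff_eq_val_of_lt _ i.isLt]

def hashPairHom (m n : ℕ) (x₁ x₂ : Fin n → ZMod 2) :
    (Fin (m + n - 1) → ZMod 2) × (Fin m → ZMod 2) →+ (Fin m → ZMod 2) × (Fin m → ZMod 2) :=
  AddMonoidHom.mk' (fun p ↦ (hashTB m n p.1 p.2 x₁, hashTB m n p.1 p.2 x₂)) fun p q ↦ by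
    ext : 1 <;>
    · simp only [hashTB, Prod.fst_add, Prod.snd_add, toeplitz_add, Matrix.add_mulVec]
      abel

lemma hashPairHom_surjective (m n : ℕ) {x₁ x₂ : Fin n → ZMod 2} (hx : x₁ ≠ x₂) :
    Function.Surjective (hashPairHom m n x₁ x₂) := by
  rintro ⟨y₁, y₂⟩
  obtain ⟨t, ht⟩ := toeplitz_mulVec_surjective m n (sub_ne_zero.2 hx.symm) (y₂ - y₁)
  refine ⟨(t, y₁ - (toeplitz m n t).mulVec x₁), Prod.ext ?_ ?_⟩
  · simp [hashPairHom, hashTB]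
  · simp only [hashPairHom, AddMonoidHom.mk'_apply, hashTB, Matrix.mulVec_sub] at ht ⊢
    linear_combination ht

theorem toeplitz_pairwise_independent_general (m n : ℕ)
    (x₁ x₂ : Fin n → ZMod 2) (hx : x₁ ≠ x₂) (y₁ y₂ : Fin m → ZMod 2) :
    (Finset.univ.filter
        (fun p : (Fin (m + n - 1) → ZMod 2) × (Fin m → ZMod 2) =>
          hashTB m n p.1 p.2 x₁ = y₁ ∧ hashTB m n p.1 p.2 x₂ = y₂)).card
      = 2 ^ (n - 1) ∧
    ((Finset.univ.filter
        (fun p : (Fin (m + n - 1) → ZMod 2) × (Fin m → ZMod 2) =>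
          hashTB m n p.1 p.2 x₁ = y₁ ∧ hashTB m n p.1 p.2 x₂ = y₂)).card : ℝ)
        / 2 ^ (n + 2 * m - 1)
      = 1 / 2 ^ (2 * m) := by
  have hn : 1 ≤ n := Nat.one_le_iff_ne_zero.mpr fun h ↦ hx (by subst h; exact Subsingleton.elim _ _)
  have hfiber : (univ.filter fun p : (Fin (m + n - 1) → ZMod 2) × (Fin m → ZMod 2) ↦
      hashTB m n p.1 p.2 x₁ = y₁ ∧ hashTB m n p.1 p.2 x₂ = y₂) =
      univ.filter (hashPairHom m n x₁ x₂ · = (y₁, y₂)) := by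
    simp [hashPairHom, Prod.ext_iff]
  have hcard := AddMonoidHom.card_mul_card_fiber_of_surjective
    (hashPairHom_surjective m n hx) (y₁, y₂)
  simp only [Fintype.card_prod, Fintype.card_fun, ZMod.card, Fintype.card_fin,
    show m + n - 1 = m + (n - 1) by omega, pow_add] at hcard
  have hcount : #{p | hashPairHom m n x₁ x₂ p = (y₁, y₂)} = 2 ^ (n - 1) :=
    Nat.eq_of_mul_eq_mul_left (by positivity) (hcard.trans (by ring))
  rw [hfiber, hcount, show n + 2 * m - 1 = (n - 1) + 2 * m by omega, pow_add]
  refine ⟨rfl, ?_⟩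
  push_cast
  field_simp

/-- Pairwise independence of the Toeplitz hash family: for `x₁ ≠ x₂` and any
`y₁, y₂`, the number of pairs `(t, b)` with `h_{t,b}(x₁) = y₁` and
`h_{t,b}(x₂) = y₂` is `2^(n-1)`; equivalently, the fraction of such pairs
among all `2^(n+2m-1)` pairs is `1 / 2^(2m)`. -/
theorem toeplitz_pairwise_independent (m n : ℕ) (hm : 1 ≤ m) (hn : 1 ≤ n)
    (x₁ x₂ : Fin n → ZMod 2) (hx : x₁ ≠ x₂) (y₁ y₂ : Fin m → ZMod 2) :
    (Finset.univ.filter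
        (fun p : (Fin (m + n - 1) → ZMod 2) × (Fin m → ZMod 2) =>
          hashTB m n p.1 p.2 x₁ = y₁ ∧ hashTB m n p.1 p.2 x₂ = y₂)).card
      = 2 ^ (n - 1) ∧
    ((Finset.univ.filter
        (fun p : (Fin (m + n - 1) → ZMod 2) × (Fin m → ZMod 2) =>
          hashTB m n p.1 p.2 x₁ = y₁ ∧ hashTB m n p.1 p.2 x₂ = y₂)).card : ℝ)
        / 2 ^ (n + 2 * m - 1)
      = 1 / 2 ^ (2 * m) :=
  toeplitz_pairwise_independent_general m n x₁ x₂ hx y₁ y₂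
end

section
/- (Leftover hash lemma for the Toeplitz family.) Let m, n ≥ 1, let S ⊆ 𝔽₂ⁿ be nonempty, and let ε > 0. For (t, b) ∈ 𝔽₂^{m+n−1} × 𝔽₂ᵐ write c_{t,b}(S) = |{x ∈ S : h_{t,b}(x) = 0^m}|. Then the number of pairs (t, b) with |c_{t,b}(S) − |S|/2^m| ≥ ε·|S|/2^m is at most (2^m/(ε²·|S|)) · 2^{n+2m−1}; equivalently, Pr_{t,b}[ |c_{t,b}(S) − |S|/2^m| ≥ ε·|S|/2^m ] ≤ 2^m/(ε²·|S|) for uniformly random (t, b). -/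
open Finset Function Matrix

theorem Finset.card_filter_le_abs_sub_mul_sq_le {ι : Type*} (s : Finset ι) (f : ι → ℝ)
    {μ δ : ℝ} (hδ : 0 ≤ δ) :
    (#{i ∈ s | δ ≤ |f i - μ|} : ℝ) * δ ^ 2 ≤ ∑ i ∈ s, (f i - μ) ^ 2 :=
  calc (#{i ∈ s | δ ≤ |f i - μ|} : ℝ) * δ ^ 2 = ∑ i ∈ s with δ ≤ |f i - μ|, δ ^ 2 := by
        rw [sum_const, nsmul_eq_mul]
    _ ≤ ∑ i ∈ s with δ ≤ |f i - μ|, (f i - μ) ^ 2 := sum_le_sum fun i hi => by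
        rw [← sq_abs (f i - μ)]
        exact pow_le_pow_left₀ hδ (mem_filter.1 hi).2 2
    _ ≤ ∑ i ∈ s, (f i - μ) ^ 2 :=
        sum_le_sum_of_subset_of_nonneg (filter_subset _ _) fun _ _ _ => sq_nonneg _

section PairwiseIndependent

variable {P X : Type*} [Fintype P] (hit : P → X → Prop) [DecidableRel hit] (S : Finset X)

theorem sum_card_filter_sq :
    ∑ p, #{x ∈ S | hit p x} ^ 2 = ∑ x ∈ S, ∑ y ∈ S, #{p | hit p x ∧ hit p y} := by
  simp_rw [card_filter, sq, sum_mul_sum, ite_zero_mul_ite_zero, mul_one]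
  rw [sum_comm]
  exact sum_congr rfl fun _ _ => sum_comm

theorem sum_sq_card_filter_sub_eq_of_pairwise {C : ℝ} (hC : C ≠ 0)
    (h₁ : ∀ x ∈ S, (#{p | hit p x} : ℝ) = Fintype.card P / C)
    (h₂ : ∀ x ∈ S, ∀ y ∈ S, x ≠ y → (#{p | hit p x ∧ hit p y} : ℝ) = Fintype.card P / C ^ 2) :
    ∑ p, ((#{x ∈ S | hit p x} : ℝ) - #S / C) ^ 2 = Fintype.card P * #S * (C - 1) / C ^ 2 := by
  classical
  have hsum : ∑ p, (#{x ∈ S | hit p x} : ℝ) = #S * (Fintype.card P / C) := by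
    have := sum_card_bipartiteAbove_eq_sum_card_bipartiteBelow (s := univ) (t := S) (r := hit)
    simp only [bipartiteAbove, bipartiteBelow] at this
    rw [← Nat.cast_sum, this, Nat.cast_sum, sum_congr rfl h₁, sum_const, nsmul_eq_mul]
  have hdiag (x : X) (hx : x ∈ S) : ∑ y ∈ S, (#{p | hit p x ∧ hit p y} : ℝ)
      = Fintype.card P / C + (#S - 1) * (Fintype.card P / C ^ 2) := by
    rw [← add_sum_erase S _ hx, sum_congr rfl fun y hy => h₂ x hx y (mem_erase.1 hy).2
      (ne_of_mem_erase hy).symm, sum_const, nsmul_eq_mul, card_erase_of_mem hx,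
      Nat.cast_sub (card_pos.2 ⟨x, hx⟩), Nat.cast_one]
    simp only [and_self, h₁ x hx]
  have hsq : ∑ p, (#{x ∈ S | hit p x} : ℝ) ^ 2
      = #S * (Fintype.card P / C + (#S - 1) * (Fintype.card P / C ^ 2)) := by
    rw [← nsmul_eq_mul, ← sum_const, ← sum_congr rfl hdiag]
    exact_mod_cast sum_card_filter_sq hit S
  simp only [sub_sq, sum_add_distrib, sum_sub_distrib, ← sum_mul, ← mul_sum, hsum, hsq, sum_const,
    card_univ, nsmul_eq_mul]
  field_simp
  ring

theorem card_filter_le_abs_sub_mul_le_of_pairwise {C ε : ℝ} (hC : 1 ≤ C) (hε : 0 ≤ ε)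
    (h₁ : ∀ x ∈ S, (#{p | hit p x} : ℝ) = Fintype.card P / C)
    (h₂ : ∀ x ∈ S, ∀ y ∈ S, x ≠ y → (#{p | hit p x ∧ hit p y} : ℝ) = Fintype.card P / C ^ 2) :
    (#{p | ε * #S / C ≤ |(#{x ∈ S | hit p x} : ℝ) - #S / C|} : ℝ) * (ε ^ 2 * #S)
      ≤ (C - 1) * Fintype.card P := by
  have hC₀ : 0 < C := by linarith
  have hcheb := (univ : Finset P).card_filter_le_abs_sub_mul_sq_le
    (fun p => (#{x ∈ S | hit p x} : ℝ)) (μ := #S / C) (by positivity : 0 ≤ ε * #S / C)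
  rw [sum_sq_card_filter_sub_eq_of_pairwise hit S hC₀.ne' h₁ h₂, div_pow, mul_div_assoc',
    div_le_div_iff_of_pos_right (by positivity)] at hcheb
  obtain hS | hS := (#S).eq_zero_or_pos
  · simp only [hS, Nat.cast_zero, mul_zero]
    exact mul_nonneg (sub_nonneg.2 hC) (Nat.cast_nonneg _)
  · refine le_of_mul_le_mul_right ?_ (Nat.cast_pos.2 hS)
    linarith

end PairwiseIndependent

theorem AddMonoidHom.card_filter_eq_zero_mul_card_of_surjective {G H F : Type*} [AddGroup G]
    [Fintype G] [AddMonoid H] [Fintype H] [DecidableEq H] [FunLike F G H]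
    [AddMonoidHomClass F G H] (f : F) (hf : Surjective f) :
    #{g | f g = 0} * Fintype.card H = Fintype.card G := by
  rw [← card_univ (α := G), card_eq_sum_card_fiberwise (f := f) (s := univ) (t := univ)
      fun _ _ => mem_univ _,
    sum_congr rfl fun h _ => card_fiber_eq_of_mem_range f (hf h) (hf 0), sum_const, card_univ,
    smul_eq_mul, mul_comm]

section HashCount

variable {T H : Type*} [Fintype T] [Fintype H] [AddGroup H] [DecidableEq H]

theorem card_filter_add_eq_zero_and_add_eq_zero (f g : T → H) :
    #{p : T × H | f p.1 + p.2 = 0 ∧ g p.1 + p.2 = 0} = #{t | f t = g t} := by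
  refine card_nbij' Prod.fst (fun t => (t, -f t)) ?_ ?_ ?_ ?_
  · rintro ⟨t, b⟩ h
    simp only [coe_filter, mem_univ, true_and, Set.mem_ofPred_eq] at h ⊢
    exact add_right_cancel (h.1.trans h.2.symm)
  · intro t h
    simp_all
  · rintro ⟨t, b⟩ h
    simp only [coe_filter, mem_univ, true_and, Set.mem_ofPred_eq] at h
    exact Prod.ext rfl (neg_eq_of_add_eq_zero_right h.1)
  · intro t _
    rfl

theorem card_filter_add_eq_zero (f : T → H) :
    #{p : T × H | f p.1 + p.2 = 0} = Fintype.card T := by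
  simpa using card_filter_add_eq_zero_and_add_eq_zero f f

end HashCount

section SlidingMatrix

variable {K : Type*} [Field K] {m n : ℕ}

def slidingMatrix (m : ℕ) (z : Fin n → K) : Matrix (Fin m) (Fin (m + n - 1)) K :=
  of fun i k => if h : i.val ≤ k.val ∧ k.val < i.val + n then z ⟨i + n - 1 - k, by omega⟩ else 0

theorem slidingMatrix_vecMul_injective {z : Fin n → K} (hz : z ≠ 0) :
    Injective (· ᵥ* slidingMatrix m z) := by
  classical
  rw [← coe_vecMulLinear, injective_iff_map_eq_zero]
  intro c hc
  by_contra hc₀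
  obtain ⟨i₀, hi₀, hmax⟩ : ∃ i₀, c i₀ ≠ 0 ∧ ∀ i, i₀ < i → c i = 0 := by
    obtain ⟨i₀, hi₀, hmax⟩ := exists_max_image {i | c i ≠ 0} id
      (by simpa [Finset.Nonempty, funext_iff] using hc₀)
    exact ⟨i₀, (mem_filter.1 hi₀).2, fun i hi =>
      by_contra fun h => (hmax i (by simpa using h)).not_gt hi⟩
  obtain ⟨j₀, hj₀, hmin⟩ : ∃ j₀, z j₀ ≠ 0 ∧ ∀ j, j < j₀ → z j = 0 := by
    obtain ⟨j₀, hj₀, hmin⟩ := exists_min_image {j | z j ≠ 0} id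
      (by simpa [Finset.Nonempty, funext_iff] using hz)
    exact ⟨j₀, (mem_filter.1 hj₀).2, fun j hj =>
      by_contra fun h => (hmin j (by simpa using h)).not_gt hj⟩
  -- In column `i₀ + n - 1 - j₀` only row `i₀` meets both `c ≠ 0` and a nonzero entry of `z`.
  have hcol := congr_fun hc ⟨i₀ + n - 1 - j₀, by omega⟩
  simp only [vecMulLinear_apply, vecMul, dotProduct, slidingMatrix, of_apply, Pi.zero_apply] at hcol
  rw [sum_eq_single i₀ ?_ (by simp), dif_pos (by omega)] at hcol
  · refine mul_ne_zero hi₀ ?_ hcol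
    convert hj₀ using 2
    exact Fin.ext (by dsimp only; omega)
  · intro i _ hi
    obtain hlt | hgt := hi.lt_or_gt
    · split_ifs with h
      · rw [hmin _ (Fin.lt_def.2 (by dsimp only; omega)), mul_zero]
      · rw [mul_zero]
    · rw [hmax i hgt, zero_mul]

theorem slidingMatrix_mulVec_surjective {z : Fin n → K} (hz : z ≠ 0) :
    Surjective (slidingMatrix m z).mulVec := by
  have hrank : (slidingMatrix m z).rank = m := by
    rw [(vecMul_injective_iff.1 (slidingMatrix_vecMul_injective hz)).rank_matrix,
      Fintype.card_fin]
  rw [← coe_mulVecLin, ← LinearMap.range_eq_top]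
  apply Submodule.eq_top_of_finrank_eq
  rw [Module.finrank_fin_fun]
  exact hrank

end SlidingMatrix

section Toeplitz

variable {m n : ℕ}

theorem toeplitz_mulVec_eq_slidingMatrix_mulVec (t : Fin (m + n - 1) → ZMod 2)
    (z : Fin n → ZMod 2) : toeplitz m n t *ᵥ z = slidingMatrix m z *ᵥ t := by
  ext i
  simp only [mulVec, dotProduct, toeplitz, slidingMatrix, of_apply]
  refine Fintype.sum_of_injective
    (fun j : Fin n => (⟨i + (n - 1) - j, by omega⟩ : Fin (m + n - 1))) ?_ _ _ ?_ ?_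
  · intro j j' h
    simp only [Fin.ext_iff] at h ⊢
    omega
  · intro k hk
    rw [dif_neg, zero_mul]
    rintro ⟨h₁, h₂⟩
    exact hk ⟨⟨i + n - 1 - k, by omega⟩, Fin.ext (by simp only; omega)⟩
  · intro j
    rw [dif_pos (by dsimp only; omega), mul_comm]
    congr
    ext
    simp only
    omega

theorem card_toeplitz_mulVec_eq_zero_mul {z : Fin n → ZMod 2} (hz : z ≠ 0) :
    #{t | toeplitz m n t *ᵥ z = 0} * 2 ^ m = 2 ^ (m + n - 1) := by
  have h := AddMonoidHom.card_filter_eq_zero_mul_card_of_surjective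
    (slidingMatrix m z).mulVecLin (slidingMatrix_mulVec_surjective hz)
  simp only [mulVecLin_apply, ← toeplitz_mulVec_eq_slidingMatrix_mulVec, Fintype.card_fun,
    ZMod.card, Fintype.card_fin] at h
  exact h

theorem card_hashTB_eq_zero (x : Fin n → ZMod 2) :
    #{p : (Fin (m + n - 1) → ZMod 2) × (Fin m → ZMod 2) | hashTB m n p.1 p.2 x = 0}
      = 2 ^ (m + n - 1) :=
  (card_filter_add_eq_zero (fun t => toeplitz m n t *ᵥ x)).trans (by simp)

theorem card_hashTB_eq_zero_and_eq_zero_mul {x y : Fin n → ZMod 2} (hxy : x ≠ y) :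
    #{p : (Fin (m + n - 1) → ZMod 2) × (Fin m → ZMod 2) |
        hashTB m n p.1 p.2 x = 0 ∧ hashTB m n p.1 p.2 y = 0} * 2 ^ m = 2 ^ (m + n - 1) := by
  rw [← card_toeplitz_mulVec_eq_zero_mul (sub_ne_zero.2 hxy)]
  congr 1
  refine (card_filter_add_eq_zero_and_add_eq_zero (fun t => toeplitz m n t *ᵥ x)
    (fun t => toeplitz m n t *ᵥ y)).trans ?_
  simp_rw [mulVec_sub, sub_eq_zero]

end Toeplitz

theorem toeplitz_leftover_hash_general (m n : ℕ)
    (S : Finset (Fin n → ZMod 2)) (hS : S.Nonempty) (ε : ℝ) (hε : 0 < ε) :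
    ((Finset.univ.filter
        (fun p : (Fin (m + n - 1) → ZMod 2) × (Fin m → ZMod 2) =>
          ε * (S.card : ℝ) / 2 ^ m ≤
            |((S.filter (fun x => hashTB m n p.1 p.2 x = 0)).card : ℝ)
              - (S.card : ℝ) / 2 ^ m|)).card : ℝ)
      ≤ (2 ^ m / (ε ^ 2 * (S.card : ℝ))) * 2 ^ (n + 2 * m - 1) ∧
    ((Finset.univ.filter
        (fun p : (Fin (m + n - 1) → ZMod 2) × (Fin m → ZMod 2) =>
          ε * (S.card : ℝ) / 2 ^ m ≤
            |((S.filter (fun x => hashTB m n p.1 p.2 x = 0)).card : ℝ)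
              - (S.card : ℝ) / 2 ^ m|)).card : ℝ) / 2 ^ (n + 2 * m - 1)
      ≤ 2 ^ m / (ε ^ 2 * (S.card : ℝ)) := by
  have hcard : (Fintype.card ((Fin (m + n - 1) → ZMod 2) × (Fin m → ZMod 2)) : ℝ)
      = 2 ^ (m + n - 1) * 2 ^ m := by
    simp
  have hdev := card_filter_le_abs_sub_mul_le_of_pairwise
    (fun (p : (Fin (m + n - 1) → ZMod 2) × (Fin m → ZMod 2)) x => hashTB m n p.1 p.2 x = 0) S
    (C := 2 ^ m) (one_le_pow₀ one_le_two) hε.le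
    (fun x _ => by rw [card_hashTB_eq_zero, hcard]; push_cast; field_simp)
    (fun x _ y _ hxy => by
      rw [hcard, eq_div_iff (by positivity), sq, ← mul_assoc]
      exact_mod_cast congrArg (· * 2 ^ m) (card_hashTB_eq_zero_and_eq_zero_mul (m := m) hxy))
  rw [hcard, ← pow_add, show m + n - 1 + m = n + 2 * m - 1 by omega] at hdev
  have hN : (0 : ℝ) < 2 ^ (n + 2 * m - 1) := by positivity
  rw [div_le_iff₀ hN, and_self, div_mul_eq_mul_div,
    le_div_iff₀ (by have := hS.card_pos; positivity)]
  linarith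

/-- Leftover hash lemma for the Toeplitz family: for nonempty `S ⊆ 𝔽₂ⁿ` and
`ε > 0`, the number of pairs `(t, b)` with
`|c_{t,b}(S) − |S|/2^m| ≥ ε·|S|/2^m` is at most
`(2^m / (ε² |S|)) · 2^(n+2m-1)`; equivalently, the corresponding fraction of
pairs is at most `2^m / (ε² |S|)`. -/
theorem toeplitz_leftover_hash (m n : ℕ) (hm : 1 ≤ m) (hn : 1 ≤ n)
    (S : Finset (Fin n → ZMod 2)) (hS : S.Nonempty) (ε : ℝ) (hε : 0 < ε) :
    ((Finset.univ.filter
        (fun p : (Fin (m + n - 1) → ZMod 2) × (Fin m → ZMod 2) =>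
          ε * (S.card : ℝ) / 2 ^ m ≤
            |((S.filter (fun x => hashTB m n p.1 p.2 x = 0)).card : ℝ)
              - (S.card : ℝ) / 2 ^ m|)).card : ℝ)
      ≤ (2 ^ m / (ε ^ 2 * (S.card : ℝ))) * 2 ^ (n + 2 * m - 1) ∧
    ((Finset.univ.filter
        (fun p : (Fin (m + n - 1) → ZMod 2) × (Fin m → ZMod 2) =>
          ε * (S.card : ℝ) / 2 ^ m ≤
            |((S.filter (fun x => hashTB m n p.1 p.2 x = 0)).card : ℝ)
              - (S.card : ℝ) / 2 ^ m|)).card : ℝ) / 2 ^ (n + 2 * m - 1)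
      ≤ 2 ^ m / (ε ^ 2 * (S.card : ℝ)) :=
  toeplitz_leftover_hash_general m n S hS ε hε
end

section
/- Let m, n ≥ 1 with m + 5 ≤ n, and let S ⊆ 𝔽₂ⁿ satisfy |S| ≤ 2^{m+5}. For (t, b) ∈ 𝔽₂^{m+n−1} × 𝔽₂ᵐ write c_{t,b}(S) = |{x ∈ S : h_{t,b}(x) = 0^m}|. Then the fraction of pairs (t, b) with c_{t,b}(S) ≥ 48 is at most 1/8. -/
open Finset Matrix

theorem sq_mul_card_filter_le_sum_sq_sub {ι : Type*} (s : Finset ι) (f : ι → ℝ) (μ : ℝ) {r : ℝ}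
    (hr : 0 ≤ r) : r ^ 2 * #{i ∈ s | μ + r ≤ f i} ≤ ∑ i ∈ s, (f i - μ) ^ 2 := by
  calc r ^ 2 * #{i ∈ s | μ + r ≤ f i} = ∑ i ∈ s with μ + r ≤ f i, r ^ 2 := by
        rw [sum_const, nsmul_eq_mul, mul_comm]
    _ ≤ ∑ i ∈ s with μ + r ≤ f i, (f i - μ) ^ 2 := by
        gcongr with i hi
        linarith [(mem_filter.mp hi).2]
    _ ≤ ∑ i ∈ s, (f i - μ) ^ 2 :=
        sum_le_sum_of_subset_of_nonneg (filter_subset _ _) fun _ _ _ => sq_nonneg _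

theorem card_filter_snd_eq_and {α β : Type*} [Fintype α] [Fintype β] [DecidableEq β] (g : α → β)
    (P : α → Prop) [DecidablePred P] : #{p : α × β | p.2 = g p.1 ∧ P p.1} = #{a | P a} := by
  rw [card_filter, card_filter, Fintype.sum_prod_type]
  simp only [ite_and, sum_ite_eq', mem_univ, ↓reduceIte]

section HashFamily

/-! `h ω` is a hash function drawn uniformly from the finite family `Ω`: each point is sent to `y`
with probability `q`, and two distinct points both are with probability at most `q²`. -/

variable {Ω X Y : Type*} [Fintype Ω] [DecidableEq Y] (h : Ω → X → Y) (y : Y) (S : Finset X)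

theorem sum_card_filter_hash_eq :
    ∑ ω, #{x ∈ S | h ω x = y} = ∑ x ∈ S, #{ω | h ω x = y} :=
  sum_card_bipartiteAbove_eq_sum_card_bipartiteBelow (fun ω x => h ω x = y)

theorem sum_card_filter_hash_sq_eq :
    ∑ ω, #{x ∈ S | h ω x = y} ^ 2 = ∑ x ∈ S, ∑ x' ∈ S, #{ω | h ω x = y ∧ h ω x' = y} := by
  rw [← sum_product' (f := fun x x' => #{ω | h ω x = y ∧ h ω x' = y})]
  refine .trans ?_ (sum_card_bipartiteAbove_eq_sum_card_bipartiteBelow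
      (fun ω (p : X × X) => h ω p.1 = y ∧ h ω p.2 = y))
  refine sum_congr rfl fun ω _ => ?_
  rw [sq, ← card_product, bipartiteAbove]
  congr 1
  ext
  simp [and_and_and_comm]

variable {h y} {q : ℝ}

theorem sum_cast_card_filter_hash_eq (hx : ∀ x, (#{ω | h ω x = y} : ℝ) = q * Fintype.card Ω) :
    ∑ ω, (#{x ∈ S | h ω x = y} : ℝ) = #S * q * Fintype.card Ω := by
  rw [← Nat.cast_sum, sum_card_filter_hash_eq, Nat.cast_sum, sum_congr rfl fun x _ => hx x,
    sum_const, nsmul_eq_mul, mul_assoc]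

theorem sum_cast_card_filter_hash_sq_le [DecidableEq X]
    (hx : ∀ x, (#{ω | h ω x = y} : ℝ) = q * Fintype.card Ω)
    (hxx : ∀ x x', x ≠ x' → (#{ω | h ω x = y ∧ h ω x' = y} : ℝ) ≤ q ^ 2 * Fintype.card Ω) :
    ∑ ω, (#{x ∈ S | h ω x = y} : ℝ) ^ 2
      ≤ #S * q * Fintype.card Ω + (#S * q) ^ 2 * Fintype.card Ω := by
  have term : ∀ x x', (#{ω | h ω x = y ∧ h ω x' = y} : ℝ)
      ≤ (if x = x' then q * Fintype.card Ω else 0) + q ^ 2 * Fintype.card Ω := by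
    intro x x'
    split_ifs with hxx'
    · subst hxx'
      simp only [and_self, hx]
      have : 0 ≤ q ^ 2 * Fintype.card Ω := by positivity
      linarith
    · simpa using hxx x x' hxx'
  calc ∑ ω, (#{x ∈ S | h ω x = y} : ℝ) ^ 2
      = ∑ x ∈ S, ∑ x' ∈ S, (#{ω | h ω x = y ∧ h ω x' = y} : ℝ) := by
        exact_mod_cast sum_card_filter_hash_sq_eq h y S
    _ ≤ ∑ x ∈ S, ∑ x' ∈ S,
          ((if x = x' then q * Fintype.card Ω else 0) + q ^ 2 * Fintype.card Ω) := by
        gcongr with x _ x' _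
        exact term x x'
    _ = #S * q * Fintype.card Ω + (#S * q) ^ 2 * Fintype.card Ω := by
        simp only [sum_add_distrib, sum_ite_eq, sum_const, nsmul_eq_mul, sum_ite_mem, inter_self]
        ring

theorem sum_cast_card_filter_hash_sub_sq_le [DecidableEq X]
    (hx : ∀ x, (#{ω | h ω x = y} : ℝ) = q * Fintype.card Ω)
    (hxx : ∀ x x', x ≠ x' → (#{ω | h ω x = y ∧ h ω x' = y} : ℝ) ≤ q ^ 2 * Fintype.card Ω) :
    ∑ ω, ((#{x ∈ S | h ω x = y} : ℝ) - #S * q) ^ 2 ≤ #S * q * Fintype.card Ω := by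
  have expand : ∑ ω, ((#{x ∈ S | h ω x = y} : ℝ) - #S * q) ^ 2 =
      ∑ ω, (#{x ∈ S | h ω x = y} : ℝ) ^ 2 - 2 * (#S * q) * ∑ ω, (#{x ∈ S | h ω x = y} : ℝ)
        + (#S * q) ^ 2 * Fintype.card Ω := by
    have hsq : ∀ a c : ℝ, (a - c) ^ 2 = a ^ 2 - 2 * c * a + c ^ 2 := fun a c => by ring
    simp only [hsq, sum_add_distrib, sum_sub_distrib, ← mul_sum, sum_const, card_univ,
      nsmul_eq_mul]
    ring
  rw [expand, sum_cast_card_filter_hash_eq S hx]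
  linarith [sum_cast_card_filter_hash_sq_le S hx hxx]

theorem sq_mul_card_filter_hash_ge_le [DecidableEq X]
    (hx : ∀ x, (#{ω | h ω x = y} : ℝ) = q * Fintype.card Ω)
    (hxx : ∀ x x', x ≠ x' → (#{ω | h ω x = y ∧ h ω x' = y} : ℝ) ≤ q ^ 2 * Fintype.card Ω)
    {r : ℝ} (hr : 0 ≤ r) :
    r ^ 2 * #{ω | #S * q + r ≤ #{x ∈ S | h ω x = y}} ≤ #S * q * Fintype.card Ω :=
  (sq_mul_card_filter_le_sum_sq_sub _ _ _ hr).trans (sum_cast_card_filter_hash_sub_sq_le S hx hxx)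

end HashFamily

section Toeplitz

variable {m n : ℕ}

def toeplitzIndex (j : Fin n) : Fin m ↪ Fin (m + n - 1) where
  toFun i := ⟨i.val + (n - 1) - j.val, by have := i.isLt; have := j.isLt; omega⟩
  inj' a b hab := by
    simp only [Fin.mk.injEq] at hab
    have := j.isLt
    omega

theorem toeplitz_apply (t : Fin (m + n - 1) → ZMod 2) (i : Fin m) (j : Fin n) :
    toeplitz m n t i j = t (toeplitzIndex j i) := rfl

theorem toeplitz_sub (t t' : Fin (m + n - 1) → ZMod 2) :
    toeplitz m n (t - t') = toeplitz m n t - toeplitz m n t' := by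
  ext; rfl

/-- If `j₀` is the last column met by `z` and `t` lives on the diagonals through column `j₀`, the
largest nonzero coordinate of `t` would appear alone in a row of `A_t z`. -/
theorem eq_zero_of_toeplitz_mulVec_eq_zero {t : Fin (m + n - 1) → ZMod 2} {z : Fin n → ZMod 2}
    {j₀ : Fin n} (hz : z j₀ ≠ 0) (hz_gt : ∀ j, j₀ < j → z j = 0) (ht : toeplitz m n t *ᵥ z = 0)
    (ht_supp : ∀ k ∉ Set.range (toeplitzIndex j₀), t k = 0) : t = 0 := by
  by_contra hne
  obtain ⟨k, hk, hk_max⟩ := (univ.filter (t · ≠ 0)).exists_max_image id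
    (by simpa [Finset.Nonempty, funext_iff] using hne)
  simp only [mem_filter, mem_univ, true_and, id] at hk hk_max
  obtain ⟨i, rfl⟩ : k ∈ Set.range (toeplitzIndex j₀) := by_contra fun h => hk (ht_supp k h)
  have hrow : ∑ j, t (toeplitzIndex j i) * z j = t (toeplitzIndex j₀ i) * z j₀ := by
    refine sum_eq_single j₀ (fun j _ hj => ?_) (by simp)
    rcases lt_or_gt_of_ne hj with hlt | hgt
    · have : toeplitzIndex j₀ i < toeplitzIndex j i := by
        rw [Fin.lt_def]
        change i.val + (n - 1) - j₀.val < i.val + (n - 1) - j.val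
        have := j₀.isLt
        omega
      rw [not_imp_comm.mp (hk_max _) (not_le.mpr this), zero_mul]
    · rw [hz_gt j hgt, mul_zero]
  have := congrFun ht i
  simp only [mulVec, dotProduct, toeplitz_apply, hrow, Pi.zero_apply, mul_eq_zero] at this
  tauto

theorem two_pow_mul_card_ker_toeplitz_mulVec_le {z : Fin n → ZMod 2} (hz : z ≠ 0) :
    2 ^ m * #{t | toeplitz m n t *ᵥ z = 0} ≤ 2 ^ (m + n - 1) := by
  obtain ⟨j₀, hj₀, hj₀_max⟩ := (univ.filter (z · ≠ 0)).exists_max_image id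
    (by simpa [Finset.Nonempty, funext_iff] using hz)
  simp only [mem_filter, mem_univ, true_and, id] at hj₀ hj₀_max
  set W := univ.map (toeplitzIndex (m := m) j₀)
  have hinj : Set.InjOn (fun t (k : {k // k ∉ W}) => t k)
      (({t | toeplitz m n t *ᵥ z = 0} : Finset _) : Set (Fin (m + n - 1) → ZMod 2)) := by
    intro t ht t' ht' htt'
    simp only [coe_filter, mem_univ, true_and, Set.mem_ofPred_eq] at ht ht'
    rw [← sub_eq_zero]
    refine eq_zero_of_toeplitz_mulVec_eq_zero hj₀ (fun j hj => ?_) ?_ fun k hk => ?_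
    · by_contra h; exact absurd (hj₀_max j h) (not_le.mpr hj)
    · simp_all [toeplitz_sub, sub_mulVec]
    · have := congrFun htt' ⟨k, by simpa [W] using hk⟩
      simpa [sub_eq_zero] using this
  have hcard := card_le_card_of_injOn _ (fun _ _ => mem_univ _) hinj
  rw [card_univ, Fintype.card_fun, ZMod.card, Fintype.card_subtype_compl, Fintype.card_coe,
    card_map, card_univ, Fintype.card_fin, Fintype.card_fin] at hcard
  calc 2 ^ m * #{t | toeplitz m n t *ᵥ z = 0} ≤ 2 ^ m * 2 ^ (m + n - 1 - m) := by gcongr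
    _ = 2 ^ (m + n - 1) := by rw [← pow_add]; congr 1; have := j₀.isLt; omega

abbrev ToeplitzParams (m n : ℕ) : Type := (Fin (m + n - 1) → ZMod 2) × (Fin m → ZMod 2)

theorem card_toeplitzParams : Fintype.card (ToeplitzParams m n) = 2 ^ (m + n - 1) * 2 ^ m := by
  simp

theorem hashTB_eq_zero_iff {t : Fin (m + n - 1) → ZMod 2} {b : Fin m → ZMod 2}
    {x : Fin n → ZMod 2} : hashTB m n t b x = 0 ↔ b = -(toeplitz m n t *ᵥ x) :=
  add_eq_zero_iff_eq_neg'

theorem card_filter_hashTB_eq_zero (x : Fin n → ZMod 2) :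
    #{p : ToeplitzParams m n | hashTB m n p.1 p.2 x = 0} = 2 ^ (m + n - 1) := by
  simpa [hashTB_eq_zero_iff] using
    card_filter_snd_eq_and (β := Fin m → ZMod 2) (fun t => -(toeplitz m n t *ᵥ x)) fun _ => True

theorem card_filter_hashTB_eq_zero_and (x x' : Fin n → ZMod 2) :
    #{p : ToeplitzParams m n | hashTB m n p.1 p.2 x = 0 ∧ hashTB m n p.1 p.2 x' = 0}
      = #{t | toeplitz m n t *ᵥ (x - x') = 0} := by
  rw [← card_filter_snd_eq_and (fun t => -(toeplitz m n t *ᵥ x))]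
  congr 1
  ext ⟨t, b⟩
  simp only [mem_filter, mem_univ, true_and, hashTB_eq_zero_iff, mulVec_sub, sub_eq_zero]
  constructor
  · rintro ⟨rfl, h⟩; exact ⟨rfl, neg_inj.mp h⟩
  · rintro ⟨rfl, h⟩; exact ⟨rfl, by rw [h]⟩

theorem sq_mul_card_filter_hashTB_ge_le (S : Finset (Fin n → ZMod 2)) {r : ℝ} (hr : 0 ≤ r) :
    r ^ 2 * #{p : ToeplitzParams m n | #S * (2 ^ m)⁻¹ + r ≤ #{x ∈ S | hashTB m n p.1 p.2 x = 0}}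
      ≤ #S * (2 ^ m)⁻¹ * (2 ^ (m + n - 1) * 2 ^ m) := by
  have hΩ : (Fintype.card (ToeplitzParams m n) : ℝ) = 2 ^ (m + n - 1) * 2 ^ m := by
    exact_mod_cast card_toeplitzParams
  rw [← hΩ]
  refine sq_mul_card_filter_hash_ge_le S (fun x => ?_) (fun x x' hxx' => ?_) hr
  · rw [card_filter_hashTB_eq_zero, hΩ]
    push_cast
    field_simp
  · rw [card_filter_hashTB_eq_zero_and, hΩ]
    have hker : (2 : ℝ) ^ m * #{t | toeplitz m n t *ᵥ (x - x') = 0} ≤ 2 ^ (m + n - 1) := by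
      exact_mod_cast two_pow_mul_card_ker_toeplitz_mulVec_le (sub_ne_zero.mpr hxx')
    calc (#{t | toeplitz m n t *ᵥ (x - x') = 0} : ℝ) ≤ 2 ^ (m + n - 1) / 2 ^ m := by
          rw [le_div_iff₀ (by positivity)]
          linarith
      _ = ((2 : ℝ) ^ m)⁻¹ ^ 2 * (2 ^ (m + n - 1) * 2 ^ m) := by field_simp

end Toeplitz

theorem toeplitz_small_set_rarely_large_general (m n : ℕ)
    (S : Finset (Fin n → ZMod 2)) (hS : S.card ≤ 2 ^ (m + 5)) :
    ((Finset.univ.filter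
        (fun p : (Fin (m + n - 1) → ZMod 2) × (Fin m → ZMod 2) =>
          48 ≤ (S.filter (fun x => hashTB m n p.1 p.2 x = 0)).card)).card : ℝ)
        / 2 ^ (n + 2 * m - 1)
      ≤ 1 / 8 := by
  have hμ : (#S : ℝ) * (2 ^ m)⁻¹ ≤ 32 := by
    have : (#S : ℝ) ≤ 2 ^ m * 2 ^ 5 := by rw [← pow_add]; exact_mod_cast hS
    rw [← div_eq_mul_inv, div_le_iff₀ (by positivity)]
    linarith
  have hK : #{p : ToeplitzParams m n | 48 ≤ #{x ∈ S | hashTB m n p.1 p.2 x = 0}}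
      ≤ #{p : ToeplitzParams m n |
          (#S : ℝ) * (2 ^ m)⁻¹ + 16 ≤ #{x ∈ S | hashTB m n p.1 p.2 x = 0}} := by
    refine card_le_card fun p hp => ?_
    simp only [mem_filter, mem_univ, true_and] at hp ⊢
    have : (48 : ℝ) ≤ #{x ∈ S | hashTB m n p.1 p.2 x = 0} := by exact_mod_cast hp
    linarith
  have tail := sq_mul_card_filter_hashTB_ge_le S (m := m) (r := 16) (by norm_num)
  have hN : (2 : ℝ) ^ (n + 2 * m - 1) = 2 ^ (m + n - 1) * 2 ^ m := by
    rw [← pow_add]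
    congr 1
    omega
  rw [hN, div_le_iff₀ (by positivity)]
  have hK' : (_ : ℝ) ≤ _ := Nat.cast_le.mpr hK
  nlinarith [show (0 : ℝ) ≤ 2 ^ (m + n - 1) * 2 ^ m by positivity]

/-- If `m + 5 ≤ n` and `|S| ≤ 2^(m+5)`, then the fraction of pairs `(t, b)`
with `c_{t,b}(S) ≥ 48` is at most `1/8`. -/
theorem toeplitz_small_set_rarely_large (m n : ℕ) (hm : 1 ≤ m) (hn : 1 ≤ n)
    (hmn : m + 5 ≤ n)
    (S : Finset (Fin n → ZMod 2)) (hS : S.card ≤ 2 ^ (m + 5)) :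
    ((Finset.univ.filter
        (fun p : (Fin (m + n - 1) → ZMod 2) × (Fin m → ZMod 2) =>
          48 ≤ (S.filter (fun x => hashTB m n p.1 p.2 x = 0)).card)).card : ℝ)
        / 2 ^ (n + 2 * m - 1)
      ≤ 1 / 8 :=
  toeplitz_small_set_rarely_large_general m n S hS
end

section
/- (Output amplitudes of the IQP-plus-Boolean-circuit model.) Let n ≥ 1, let g : 𝔽₂ⁿ → 𝔽₂ and h : 𝔽₂ⁿ → ℝ be functions, let f : 𝔽₂ⁿ → 𝔽₂ be an n-variable degree-2 polynomial over 𝔽₂, and let V be a unitary 2^{n+1} × 2^{n+1} complex matrix, indexed by 𝔽₂ⁿ × 𝔽₂, such that V·e_{(x,0)} = e^{i h(x)}·e_{(x, g(x))} for every x ∈ 𝔽₂ⁿ. Let Z̄ = I_{2ⁿ} ⊗ Z, where Z is the diagonal 2×2 matrix diag(1, −1) acting on the last qubit. Then the vector w = (H_n ⊗ I₂)·(D_f ⊗ I₂)·V†·Z̄·V·(H_n ⊗ I₂)·e_{(0ⁿ,0)} satisfies w_{(z,0)} = gap((f+g)_z)/2ⁿ and w_{(z,1)} = 0 for every z ∈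 𝔽₂ⁿ; consequently, measuring the first n qubits yields outcome z with probability p_z(f+g) = gap((f+g)_z)²/2^{2n}. -/
/-- `gap F = Σ_{x ∈ 𝔽₂ⁿ} (−1)^{F(x)}`. -/
def gap {n : ℕ} (F : (Fin n → ZMod 2) → ZMod 2) : ℤ :=
  ∑ x : Fin n → ZMod 2, if F x = 0 then 1 else -1

/-- The matrix `H_n` with entries `(H_n)_{x,y} = (−1)^{x·y} / 2^{n/2}`. -/
noncomputable def Hmat (n : ℕ) :
    Matrix (Fin n → ZMod 2) (Fin n → ZMod 2) ℂ :=
  Matrix.of fun x y =>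
    (if (∑ i, x i * y i : ZMod 2) = 0 then 1 else -1) / (Real.sqrt 2 : ℂ) ^ n

/-- The diagonal matrix `D_F` with entries `(D_F)_{x,x} = (−1)^{F(x)}`. -/
noncomputable def Dmat {n : ℕ} (F : (Fin n → ZMod 2) → ZMod 2) :
    Matrix (Fin n → ZMod 2) (Fin n → ZMod 2) ℂ :=
  Matrix.diagonal fun x => if F x = 0 then 1 else -1

open Matrix

/-- The single-qubit gate `Z = diag(1, −1)`, indexed by `𝔽₂`. -/
noncomputable def Zone : Matrix (ZMod 2) (ZMod 2) ℂ :=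
  Matrix.diagonal fun a => if a = 0 then 1 else -1

/-- The output vector
`w = (H_n ⊗ I₂)·(D_f ⊗ I₂)·V†·(I ⊗ Z)·V·(H_n ⊗ I₂)·e_{(0ⁿ,0)}`
of the IQP-plus-Boolean-circuit model. -/
noncomputable def outVec (n : ℕ) (f : (Fin n → ZMod 2) → ZMod 2)
    (V : Matrix ((Fin n → ZMod 2) × ZMod 2) ((Fin n → ZMod 2) × ZMod 2) ℂ) :
    ((Fin n → ZMod 2) × ZMod 2) → ℂ :=
  ((Matrix.kroneckerMap (· * ·) (Hmat n) (1 : Matrix (ZMod 2) (ZMod 2) ℂ)) *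
   (Matrix.kroneckerMap (· * ·) (Dmat f) (1 : Matrix (ZMod 2) (ZMod 2) ℂ)) *
   Vᴴ *
   (Matrix.kroneckerMap (· * ·)
      (1 : Matrix (Fin n → ZMod 2) (Fin n → ZMod 2) ℂ) Zone) *
   V *
   (Matrix.kroneckerMap (· * ·) (Hmat n) (1 : Matrix (ZMod 2) (ZMod 2) ℂ))).mulVec
    (Pi.single ((0 : Fin n → ZMod 2), (0 : ZMod 2)) 1)

/-! On a basis state `(x, 0)` the middle block `(D_f ⊗ I) V† (I ⊗ Z) V` acts as the scalar
`(−1)^{f(x) + g(x)}`: `V` sends it to `e^{i h(x)} (x, g(x))`, the `Z` gate contributes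
`(−1)^{g(x)}`, and `V†` undoes `V`, phase included. So the outer layers `H_n ⊗ I` never touch
the last qubit, and the `(z, 0)` entry is
`Σ_x (H_n)_{z,x} (−1)^{f(x) + g(x)} (H_n)_{x,0} = gap((f+g)_z) / 2ⁿ`. -/

open scoped Kronecker

theorem ite_zmod_two_add {R : Type*} [Ring R] (a b : ZMod 2) :
    (if a + b = 0 then (1 : R) else -1) =
      (if a = 0 then 1 else -1) * (if b = 0 then 1 else -1) := by
  have hab : a + b = 0 ↔ (a = 0 ↔ b = 0) := by revert a b; decide
  by_cases ha : a = 0 <;> by_cases hb : b = 0 <;> simp [hab, ha, hb]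

theorem gap_cast_complex {n : ℕ} (F : (Fin n → ZMod 2) → ZMod 2) :
    ((gap F : ℤ) : ℂ) = ∑ x, if F x = 0 then 1 else -1 := by
  simp [gap, apply_ite (Int.cast : ℤ → ℂ)]

theorem Hmat_apply_mul_Hmat_apply_zero (n : ℕ) (z x : Fin n → ZMod 2) :
    Hmat n z x * Hmat n x 0 = (if (∑ i, z i * x i : ZMod 2) = 0 then 1 else -1) / 2 ^ n := by
  have hsqrt : ((Real.sqrt 2 : ℝ) : ℂ) * (Real.sqrt 2 : ℝ) = 2 := by
    norm_cast
    exact Real.mul_self_sqrt zero_le_two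
  simp only [Hmat, Matrix.of_apply, Pi.zero_apply, mul_zero, Finset.sum_const_zero, if_true]
  rw [div_mul_div_comm, mul_one, ← mul_pow, hsqrt]

theorem diagonal_mulVec_single_one {ι R : Type*} [Fintype ι] [DecidableEq ι] [Semiring R]
    (d : ι → R) (i : ι) : diagonal d *ᵥ Pi.single i 1 = d i • Pi.single i 1 := by
  rw [diagonal_mulVec_single, ← smul_eq_mul, Pi.single_smul']

theorem Dmat_kronecker_one_mulVec_single {n : ℕ} {β : Type*} [Fintype β] [DecidableEq β]
    (F : (Fin n → ZMod 2) → ZMod 2) (x : Fin n → ZMod 2) (b : β) :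
    (Dmat F ⊗ₖ (1 : Matrix β β ℂ)) *ᵥ Pi.single (x, b) 1 =
      (if F x = 0 then (1 : ℂ) else -1) • Pi.single (x, b) 1 := by
  rw [Dmat, ← diagonal_one, diagonal_kronecker_diagonal, diagonal_mulVec_single_one, mul_one]

theorem one_kronecker_Zone_mulVec_single {ι : Type*} [Fintype ι] [DecidableEq ι] (x : ι)
    (b : ZMod 2) :
    ((1 : Matrix ι ι ℂ) ⊗ₖ Zone) *ᵥ Pi.single (x, b) 1 =
      (if b = 0 then (1 : ℂ) else -1) • Pi.single (x, b) 1 := by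
  rw [Zone, ← diagonal_one, diagonal_kronecker_diagonal, diagonal_mulVec_single_one, one_mul]

theorem mul_mul_mulVec_eq_smul_of_mulVec_eq_smul {m n K : Type*} [Fintype m] [Fintype n]
    [DecidableEq n] [CommSemiring K] {V : Matrix m n K} {W : Matrix n m K} (hWV : W * V = 1)
    {D : Matrix m m K} {v : n → K} {d : K} (hD : D *ᵥ (V *ᵥ v) = d • (V *ᵥ v)) :
    (W * D * V) *ᵥ v = d • v := by
  rw [← mulVec_mulVec, ← mulVec_mulVec, hD, mulVec_smul, mulVec_mulVec, hWV, one_mulVec]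

section Kronecker

variable {ι β R : Type*} [Fintype ι] [DecidableEq ι] [Fintype β] [DecidableEq β] [CommSemiring R]

theorem kronecker_one_mulVec_single (A : Matrix ι ι R) (x : ι) (b : β) :
    (A ⊗ₖ (1 : Matrix β β R)) *ᵥ Pi.single (x, b) 1 = ∑ y, A y x • Pi.single (y, b) 1 := by
  ext ⟨y, c⟩
  by_cases hc : c = b <;> simp [Pi.single_apply, Finset.sum_apply, hc]

theorem kronecker_one_conj_mulVec_single_apply (B : Matrix ι ι R) {M : Matrix (ι × β) (ι × β) R}
    {s : ι → R} {b : β} (hM : ∀ x, M *ᵥ Pi.single (x, b) 1 = s x • Pi.single (x, b) 1)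
    (x₀ y : ι) (c : β) :
    ((B ⊗ₖ (1 : Matrix β β R) * M * B ⊗ₖ 1) *ᵥ Pi.single (x₀, b) 1) (y, c) =
      if c = b then ∑ x, B y x * s x * B x x₀ else 0 := by
  simp only [← mulVec_mulVec, kronecker_one_mulVec_single, mulVec_sum, mulVec_smul, hM, smul_smul]
  split_ifs with hc
  · subst hc
    simp only [Finset.sum_apply, Pi.smul_apply, Pi.single_apply, smul_eq_mul, Prod.mk.injEq,
      mul_ite, mul_one, mul_zero, and_true, Finset.sum_ite_eq, Finset.mem_univ, if_true]
    exact Finset.sum_congr rfl fun _ _ => by ring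
  · simp [Finset.sum_apply, hc]

end Kronecker

theorem iqp_plus_boolean_amplitude_general (n : ℕ)
    (g : (Fin n → ZMod 2) → ZMod 2) (h : (Fin n → ZMod 2) → ℝ)
    (f : (Fin n → ZMod 2) → ZMod 2)
    (V : Matrix ((Fin n → ZMod 2) × ZMod 2) ((Fin n → ZMod 2) × ZMod 2) ℂ)
    (hV₁ : Vᴴ * V = 1)
    (hVact : ∀ x : Fin n → ZMod 2,
      V.mulVec (Pi.single (x, (0 : ZMod 2)) 1) =
        Complex.exp (Complex.I * (h x : ℂ)) •
          (Pi.single (x, g x) 1 : ((Fin n → ZMod 2) × ZMod 2) → ℂ)) :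
    ∀ z : Fin n → ZMod 2,
      outVec n f V (z, 0) =
        ((gap (fun x => (f x + g x) + ∑ i, z i * x i) : ℤ) : ℂ) / 2 ^ n ∧
      outVec n f V (z, 1) = 0 ∧
      ‖outVec n f V (z, 0)‖ ^ 2
          + ‖outVec n f V (z, 1)‖ ^ 2 =
        ((gap (fun x => (f x + g x) + ∑ i, z i * x i) : ℝ)) ^ 2
          / 2 ^ (2 * n) := by
  have hVZV (x : Fin n → ZMod 2) : (Vᴴ * (1 ⊗ₖ Zone) * V) *ᵥ Pi.single (x, 0) 1 =
      (if g x = 0 then (1 : ℂ) else -1) • Pi.single (x, 0) 1 := by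
    refine mul_mul_mulVec_eq_smul_of_mulVec_eq_smul hV₁ ?_
    rw [hVact, mulVec_smul, one_kronecker_Zone_mulVec_single, smul_comm]
  have hDVZV (x : Fin n → ZMod 2) :
      (Dmat f ⊗ₖ 1 * (Vᴴ * (1 ⊗ₖ Zone) * V)) *ᵥ Pi.single (x, 0) 1 =
        (if f x + g x = 0 then (1 : ℂ) else -1) • Pi.single (x, 0) 1 := by
    rw [← mulVec_mulVec, hVZV, mulVec_smul, Dmat_kronecker_one_mulVec_single, smul_smul,
      ite_zmod_two_add, mul_comm]
  have hout (z : Fin n → ZMod 2) (c : ZMod 2) : outVec n f V (z, c) =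
      if c = 0 then ∑ x, Hmat n z x * (if f x + g x = 0 then 1 else -1) * Hmat n x 0 else 0 := by
    rw [← kronecker_one_conj_mulVec_single_apply (Hmat n) hDVZV]
    simp only [outVec, Matrix.mul_assoc]
  intro z
  have hw₀ : outVec n f V (z, 0) =
      ((gap (fun x => (f x + g x) + ∑ i, z i * x i) : ℤ) : ℂ) / 2 ^ n := by
    rw [hout, if_pos rfl, gap_cast_complex, Finset.sum_div]
    refine Finset.sum_congr rfl fun x _ => ?_
    rw [mul_right_comm, Hmat_apply_mul_Hmat_apply_zero, ite_zmod_two_add (f x + g x)]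
    ring
  have hw₁ : outVec n f V (z, 1) = 0 := by
    rw [hout, if_neg one_ne_zero]
  refine ⟨hw₀, hw₁, ?_⟩
  rw [hw₀, hw₁, norm_zero, zero_pow two_ne_zero, add_zero, norm_div, norm_pow, Complex.norm_two,
    Complex.norm_intCast, div_pow, sq_abs, ← pow_mul, mul_comm n 2]

/-- Output amplitudes of the IQP-plus-Boolean-circuit model: if the unitary
`V` computes the Boolean function `g` (with phase `h`) as
`V e_{(x,0)} = e^{i h(x)} e_{(x, g(x))}`, and `f` is a degree-2 polynomial
over `𝔽₂`, then the vector
`w = (H_n ⊗ I₂)·(D_f ⊗ I₂)·V†·(I ⊗ Z)·V·(H_n ⊗ I₂)·e_{(0ⁿ,0)}` satisfies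
`w_{(z,0)} = gap((f+g)_z)/2ⁿ` and `w_{(z,1)} = 0`; consequently measuring the
first `n` qubits yields `z` with probability `gap((f+g)_z)²/2^{2n}`. -/
theorem iqp_plus_boolean_amplitude (n : ℕ) (hn : 1 ≤ n)
    (g : (Fin n → ZMod 2) → ZMod 2) (h : (Fin n → ZMod 2) → ℝ)
    (α : Fin n → ZMod 2) (β : Fin n → Fin n → ZMod 2)
    (f : (Fin n → ZMod 2) → ZMod 2)
    (hf : ∀ x, f x = (∑ i, α i * x i) +
      ∑ p ∈ Finset.univ.filter (fun p : Fin n × Fin n => p.2 < p.1),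
        β p.1 p.2 * (x p.1 * x p.2))
    (V : Matrix ((Fin n → ZMod 2) × ZMod 2) ((Fin n → ZMod 2) × ZMod 2) ℂ)
    (hV₁ : Vᴴ * V = 1) (hV₂ : V * Vᴴ = 1)
    (hVact : ∀ x : Fin n → ZMod 2,
      V.mulVec (Pi.single (x, (0 : ZMod 2)) 1) =
        Complex.exp (Complex.I * (h x : ℂ)) •
          (Pi.single (x, g x) 1 : ((Fin n → ZMod 2) × ZMod 2) → ℂ)) :
    ∀ z : Fin n → ZMod 2,
      outVec n f V (z, 0) =
        ((gap (fun x => (f x + g x) + ∑ i, z i * x i) : ℤ) : ℂ) / 2 ^ n ∧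
      outVec n f V (z, 1) = 0 ∧
      ‖outVec n f V (z, 0)‖ ^ 2
          + ‖outVec n f V (z, 1)‖ ^ 2 =
        ((gap (fun x => (f x + g x) + ∑ i, z i * x i) : ℝ)) ^ 2
          / 2 ^ (2 * n) :=
  iqp_plus_boolean_amplitude_general n g h f V hV₁ hVact
end

section
/- (Anti-concentration for random degree-3 polynomials.) Let n ≥ 1 and 0 < τ < 1. Choose z ∈ 𝔽₂ⁿ uniformly at random and choose an n-variable degree-3 polynomial f over 𝔽₂ uniformly at random (i.e., all coefficients α_i, β_{i,j}, γ_{i,j,k} uniform and independent in 𝔽₂). Then Pr_{z,f}[ gap(f_z)²/2^{2n} ≥ τ/2ⁿ ] ≥ (1−τ)²/3; equivalently, the number of pairs (z, f) with gap(f_z)² ≥ τ·2ⁿ is at least ((1−τ)²/3)·2ⁿ·|C|, where C is the set of all coefficient tuples. -/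
/-- The set `C` of coefficient tuples of an `n`-variable degree-3 polynomial
over `𝔽₂`: linear coefficients `α_i`, quadratic coefficients `β_{i,j}` for
`i > j`, and cubic coefficients `γ_{i,j,k}` for `i > j > k`. -/
abbrev Coeff3 (n : ℕ) :=
  (Fin n → ZMod 2) ×
  ({p : Fin n × Fin n // p.2 < p.1} → ZMod 2) ×
  ({t : Fin n × Fin n × Fin n // t.2.2 < t.2.1 ∧ t.2.1 < t.1} → ZMod 2)

/-- The degree-3 polynomial
`f(x) = Σ_i α_i x_i + Σ_{i>j} β_{i,j} x_i x_j + Σ_{i>j>k} γ_{i,j,k} x_i x_j x_k`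
determined by a coefficient tuple. -/
def poly3 {n : ℕ} (c : Coeff3 n) (x : Fin n → ZMod 2) : ZMod 2 :=
  (∑ i, c.1 i * x i) +
  (∑ p : {p : Fin n × Fin n // p.2 < p.1},
    c.2.1 p * (x p.1.1 * x p.1.2)) +
  (∑ t : {t : Fin n × Fin n × Fin n // t.2.2 < t.2.1 ∧ t.2.1 < t.1},
    c.2.2 t * (x t.1.1 * (x t.1.2.1 * x t.1.2.2)))

/-!
Write `f(x) = ⟨c, m(x)⟩`, where `c` is the coefficient tuple and `m(x)` the vector of monomials of
degree at most 3 evaluated at `x`. Orthogonality of characters in `c` turns the moments of `gap`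
into counts: `Σ_c gap(f)^k = |C| · #{(x₁, …, x_k) | Σ m(xᵢ) = 0}`. For `k = 2` this is `2ⁿ · |C|`,
since `m` is injective. For `k = 4` it is at most `3 · 4ⁿ · |C|`: the quadratic monomials force
`x₁ + x₂` and `x₁ + x₃` to be linearly dependent, so the four points cancel in pairs. The
Paley–Zygmund inequality applied to `gap(f)²` gives the bound for `z = 0`, and adding `Σ zᵢ xᵢ`
only shifts the linear coefficients.
-/

open Finset

theorem paley_zygmund_card {α : Type*} [Fintype α] (X : α → ℝ) {θ m : ℝ}
    (hθ0 : 0 ≤ θ) (hθ1 : θ ≤ 1) (hm0 : 0 ≤ m) (hmean : m * Fintype.card α ≤ ∑ a, X a) :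
    ((1 - θ) * m * Fintype.card α) ^ 2 ≤ #{a | θ * m ≤ X a} * ∑ a, X a ^ 2 := by
  have hsmall : ∑ a with ¬ θ * m ≤ X a, X a ≤ θ * m * Fintype.card α :=
    calc ∑ a with ¬ θ * m ≤ X a, X a
        ≤ ∑ a with ¬ θ * m ≤ X a, θ * m :=
          sum_le_sum fun a ha => (not_le.mp (mem_filter.mp ha).2).le
      _ = #{a | ¬ θ * m ≤ X a} * (θ * m) := by rw [sum_const, nsmul_eq_mul]
      _ ≤ Fintype.card α * (θ * m) := by
          gcongr
          exact_mod_cast card_filter_le _ _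
      _ = θ * m * Fintype.card α := mul_comm _ _
  have hlarge : (1 - θ) * m * Fintype.card α ≤ ∑ a with θ * m ≤ X a, X a := by
    linarith [sum_filter_add_sum_filter_not univ (fun a => θ * m ≤ X a) X]
  calc ((1 - θ) * m * Fintype.card α) ^ 2
      ≤ (∑ a with θ * m ≤ X a, X a) ^ 2 := by
        gcongr
    _ ≤ #{a | θ * m ≤ X a} * ∑ a with θ * m ≤ X a, X a ^ 2 := sq_sum_le_card_mul_sum_sq
    _ ≤ #{a | θ * m ≤ X a} * ∑ a, X a ^ 2 := by
        gcongr _ * ?_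
        exact sum_le_sum_of_subset_of_nonneg (filter_subset _ _) fun a _ _ => sq_nonneg (X a)

theorem AddChar.map_sum_eq_prod {ι A M : Type*} [AddCommMonoid A] [CommMonoid M]
    (ψ : AddChar A M) (s : Finset ι) (f : ι → A) :
    ψ (∑ i ∈ s, f i) = ∏ i ∈ s, ψ (f i) := by
  induction s using Finset.cons_induction with
  | empty => simp
  | cons i s hi ih => rw [sum_cons, prod_cons, AddChar.map_add_eq_mul, ih]

theorem ZModModule.add_eq_zero_iff_eq {G : Type*} [AddCommGroup G] [Module (ZMod 2) G]
    {x y : G} : x + y = 0 ↔ x = y := by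
  rw [add_eq_zero_iff_eq_neg, ZModModule.neg_eq_self]

theorem zmod_two_eq_one_of_ne_zero {a : ZMod 2} (ha : a ≠ 0) : a = 1 := by
  revert a; decide

theorem eq_zero_or_eq_zero_or_eq_of_mul_comm {ι : Type*} {a b : ι → ZMod 2}
    (h : ∀ i j, a i * b j = a j * b i) : a = 0 ∨ b = 0 ∨ a = b := by
  by_cases ha : a = 0
  · exact Or.inl ha
  obtain ⟨i, hi⟩ := Function.ne_iff.mp ha
  have hb : b = b i • a := funext fun j => by
    simpa [zmod_two_eq_one_of_ne_zero hi, mul_comm] using h i j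
  rcases eq_or_ne (b i) 0 with h0 | h1
  · exact Or.inr (Or.inl (by rw [hb, h0, zero_smul]))
  · exact Or.inr (Or.inr (by rw [hb, zmod_two_eq_one_of_ne_zero h1, one_smul]))

def signChar : AddChar (ZMod 2) ℤ where
  toFun a := if a = 0 then 1 else -1
  map_zero_eq_one' := rfl
  map_add_eq_mul' := by decide

theorem signChar_eq_one_iff (a : ZMod 2) : signChar a = 1 ↔ a = 0 := by
  revert a; decide

theorem gap_eq_sum_signChar {n : ℕ} (F : (Fin n → ZMod 2) → ZMod 2) :
    gap F = ∑ x, signChar (F x) := rfl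

namespace Coeff3

variable {n : ℕ}

-- instance search does not find this one unaided
instance : DecidableEq (Coeff3 n) := instDecidableEqProd

def dot (c w : Coeff3 n) : ZMod 2 := c.1 ⬝ᵥ w.1 + c.2.1 ⬝ᵥ w.2.1 + c.2.2 ⬝ᵥ w.2.2

def monomials (x : Fin n → ZMod 2) : Coeff3 n :=
  (x, fun p => x p.1.1 * x p.1.2, fun t => x t.1.1 * (x t.1.2.1 * x t.1.2.2))

theorem poly3_eq_dot (c : Coeff3 n) (x : Fin n → ZMod 2) : poly3 c x = dot c (monomials x) :=
  rfl

theorem dot_add_left (c c' w : Coeff3 n) : dot (c + c') w = dot c w + dot c' w := by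
  simp only [dot, Prod.fst_add, Prod.snd_add, add_dotProduct]
  ring

theorem dot_sum_right {ι : Type*} (c : Coeff3 n) (s : Finset ι) (w : ι → Coeff3 n) :
    dot c (∑ i ∈ s, w i) = ∑ i ∈ s, dot c (w i) := by
  simp only [dot, Prod.fst_sum, Prod.snd_sum, dotProduct_sum, sum_add_distrib]

theorem eq_zero_of_forall_dot_eq_zero {w : Coeff3 n} (h : ∀ c, dot c w = 0) : w = 0 := by
  refine Prod.ext (funext fun i => ?_) (Prod.ext (funext fun p => ?_) (funext fun t => ?_))
  · simpa [dot] using h (Pi.single i 1, 0, 0)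
  · simpa [dot] using h (0, Pi.single p 1, 0)
  · simpa [dot] using h (0, 0, Pi.single t 1)

def dotChar (w : Coeff3 n) : AddChar (Coeff3 n) ℤ :=
  signChar.compAddMonoidHom (AddMonoidHom.mk' (dot · w) fun c c' => dot_add_left c c' w)

theorem sum_signChar_dot (w : Coeff3 n) :
    ∑ c, signChar (dot c w) = if w = 0 then (Fintype.card (Coeff3 n) : ℤ) else 0 := by
  have hchar : dotChar w = 0 ↔ w = 0 := by
    refine ⟨fun h => eq_zero_of_forall_dot_eq_zero fun c => ?_, ?_⟩
    · exact (signChar_eq_one_iff _).mp (AddChar.eq_zero_iff.mp h c)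
    · rintro rfl
      exact AddChar.eq_zero_iff.mpr fun c => by simp [dotChar, dot]
  classical
  calc ∑ c, signChar (dot c w) = ∑ c, dotChar w c := rfl
    _ = _ := by rw [AddChar.sum_eq_ite]; simp only [hchar]

theorem sum_gap_poly3_pow (k : ℕ) :
    ∑ c : Coeff3 n, gap (poly3 c) ^ k
      = Fintype.card (Coeff3 n) * #{x : Fin k → Fin n → ZMod 2 | ∑ i, monomials (x i) = 0} := by
  have hpow (c : Coeff3 n) : gap (poly3 c) ^ k
      = ∑ x : Fin k → Fin n → ZMod 2, signChar (dot c (∑ i, monomials (x i))) := by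
    rw [gap_eq_sum_signChar, ← Fin.prod_const, Fintype.prod_sum]
    simp only [dot_sum_right, AddChar.map_sum_eq_prod, poly3_eq_dot]
  simp only [hpow]
  rw [sum_comm]
  simp only [sum_signChar_dot]
  rw [← sum_filter, sum_const, nsmul_eq_mul, mul_comm]

theorem monomials_add_eq_zero_iff {x y : Fin n → ZMod 2} :
    monomials x + monomials y = 0 ↔ x = y := by
  refine ⟨fun h => ZModModule.add_eq_zero_iff_eq.mp (congrArg Prod.fst h), ?_⟩
  rintro rfl
  exact ZModModule.add_self _

theorem card_filter_sum_monomials_two :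
    #{x : Fin 2 → Fin n → ZMod 2 | ∑ i, monomials (x i) = 0} = 2 ^ n := by
  have hdiag : ({x : Fin 2 → Fin n → ZMod 2 | ∑ i, monomials (x i) = 0} : Finset _)
      = univ.image fun p => ![p, p] := by
    ext x
    simp only [Fin.sum_univ_two, monomials_add_eq_zero_iff, mem_filter, mem_univ, true_and,
      mem_image]
    refine ⟨fun h => ⟨x 0, ?_⟩, ?_⟩
    · ext i : 1
      fin_cases i <;> simp [h]
    · rintro ⟨p, rfl⟩
      rfl
  rw [hdiag, card_image_of_injective _ fun p q h => congrFun h 0, card_univ, Fintype.card_fun,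
    ZMod.card, Fintype.card_fin]

-- With `s, t, r` the `i`-th and `s', t', r'` the `j`-th coordinates of `x, y, u`: the sum of
-- `x_i x_j` over `x, y, u, x + y + u` is the polar form of `x_i x_j` at `x + y, x + u`.
theorem polarization_mul_zmod_two (s s' t t' r r' : ZMod 2) :
    s * s' + t * t' + r * r' + (s + t + r) * (s' + t' + r')
      = (s + t) * (s' + r') + (s' + t') * (s + r) := by
  revert s s' t t' r r'; decide

theorem eq_and_eq_or_of_monomials_sum_eq_zero {x y u v : Fin n → ZMod 2}
    (h : monomials x + monomials y + monomials u + monomials v = 0) :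
    (x = y ∧ u = v) ∨ (x = u ∧ y = v) ∨ (x = v ∧ y = u) := by
  have hv : x + y + u = v := ZModModule.add_eq_zero_iff_eq.mp (congrArg Prod.fst h)
  have hlt : ∀ i j, j < i → (x + y) i * (x + u) j = (x + y) j * (x + u) i := fun i j hji => by
    have hq : x i * x j + y i * y j + u i * u j + v i * v j = 0 :=
      congrFun (congrArg (fun w : Coeff3 n => w.2.1) h) ⟨(i, j), hji⟩
    rw [← hv, Pi.add_apply, Pi.add_apply, Pi.add_apply, Pi.add_apply,
      polarization_mul_zmod_two] at hq
    exact ZModModule.add_eq_zero_iff_eq.mp hq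
  have hcomm : ∀ i j, (x + y) i * (x + u) j = (x + y) j * (x + u) i := fun i j => by
    rcases lt_trichotomy j i with hji | rfl | hij
    · exact hlt i j hji
    · rfl
    · exact (hlt j i hij).symm
  rcases eq_zero_or_eq_zero_or_eq_of_mul_comm hcomm with hxy | hxu | hyu
  · rw [ZModModule.add_eq_zero_iff_eq] at hxy
    subst hxy
    exact Or.inl ⟨rfl, by rw [← hv, ZModModule.add_self, zero_add]⟩
  · rw [ZModModule.add_eq_zero_iff_eq] at hxu
    subst hxu
    exact Or.inr (Or.inl ⟨rfl, by rw [← hv, add_right_comm, ZModModule.add_self, zero_add]⟩)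
  · rw [add_right_inj] at hyu
    subst hyu
    exact Or.inr (Or.inr ⟨by rw [← hv, add_assoc, ZModModule.add_self, add_zero], rfl⟩)

theorem card_filter_sum_monomials_four_le :
    #{x : Fin 4 → Fin n → ZMod 2 | ∑ i, monomials (x i) = 0} ≤ 3 * (2 ^ n) ^ 2 := by
  let S (f : (Fin n → ZMod 2) → (Fin n → ZMod 2) → Fin 4 → Fin n → ZMod 2) :=
    univ.image fun p : (Fin n → ZMod 2) × (Fin n → ZMod 2) => f p.1 p.2
  have hS (f) : #(S f) ≤ (2 ^ n) ^ 2 := card_image_le.trans_eq <| by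
    rw [card_univ, Fintype.card_prod, Fintype.card_fun, ZMod.card, Fintype.card_fin, sq]
  have hsub : ({x : Fin 4 → Fin n → ZMod 2 | ∑ i, monomials (x i) = 0} : Finset _)
      ⊆ S (fun a b => ![a, a, b, b]) ∪ S (fun a b => ![a, b, a, b])
        ∪ S (fun a b => ![a, b, b, a]) := by
    intro x hx
    rw [mem_filter, Fin.sum_univ_four] at hx
    simp only [S, mem_union, mem_image, mem_univ, true_and, Prod.exists]
    rcases eq_and_eq_or_of_monomials_sum_eq_zero hx.2 with ⟨h1, h2⟩ | ⟨h1, h2⟩ | ⟨h1, h2⟩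
    · refine Or.inl (Or.inl ⟨x 0, x 2, ?_⟩)
      ext i : 1; fin_cases i <;> simp [h1, h2]
    · refine Or.inl (Or.inr ⟨x 0, x 1, ?_⟩)
      ext i : 1; fin_cases i <;> simp [h1, h2]
    · refine Or.inr ⟨x 0, x 1, ?_⟩
      ext i : 1; fin_cases i <;> simp [h1, h2]
  refine (card_le_card hsub).trans <| (card_union_le _ _).trans ?_
  linarith [card_union_le (S fun a b => ![a, a, b, b]) (S fun a b => ![a, b, a, b]),
    hS fun a b => ![a, a, b, b], hS fun a b => ![a, b, a, b], hS fun a b => ![a, b, b, a]]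

theorem sum_gap_poly3_sq :
    ∑ c : Coeff3 n, gap (poly3 c) ^ 2 = 2 ^ n * Fintype.card (Coeff3 n) := by
  rw [sum_gap_poly3_pow, card_filter_sum_monomials_two, mul_comm]
  push_cast
  rfl

theorem sum_gap_poly3_pow_four_le :
    ∑ c : Coeff3 n, gap (poly3 c) ^ 4 ≤ 3 * (2 ^ n) ^ 2 * Fintype.card (Coeff3 n) := by
  rw [sum_gap_poly3_pow, mul_comm]
  gcongr
  exact_mod_cast card_filter_sum_monomials_four_le

theorem card_filter_gap_poly3_sq_ge {τ : ℝ} (hτ0 : 0 ≤ τ) (hτ1 : τ ≤ 1) :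
    (1 - τ) ^ 2 / 3 * Fintype.card (Coeff3 n)
      ≤ #{c : Coeff3 n | τ * 2 ^ n ≤ (gap (poly3 c) : ℝ) ^ 2} := by
  have h2 : 2 ^ n * (Fintype.card (Coeff3 n) : ℝ) ≤ ∑ c : Coeff3 n, (gap (poly3 c) : ℝ) ^ 2 :=
    mod_cast sum_gap_poly3_sq.ge
  have h4 : ∑ c : Coeff3 n, ((gap (poly3 c) : ℝ) ^ 2) ^ 2
      ≤ 3 * (2 ^ n) ^ 2 * (Fintype.card (Coeff3 n) : ℝ) :=
    calc ∑ c : Coeff3 n, ((gap (poly3 c) : ℝ) ^ 2) ^ 2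
        = ((∑ c : Coeff3 n, gap (poly3 c) ^ 4 : ℤ) : ℝ) := by
          push_cast
          simp only [← pow_mul]
      _ ≤ _ := by exact_mod_cast sum_gap_poly3_pow_four_le
  have hpz := paley_zygmund_card (fun c : Coeff3 n => (gap (poly3 c) : ℝ) ^ 2) hτ0 hτ1
    (by positivity) h2
  set N : ℝ := (Fintype.card (Coeff3 n) : ℝ)
  set A : ℝ := (#{c : Coeff3 n | τ * 2 ^ n ≤ (gap (poly3 c) : ℝ) ^ 2} : ℝ)
  have key : (1 - τ) ^ 2 * N * ((2 ^ n) ^ 2 * N) ≤ 3 * A * ((2 ^ n) ^ 2 * N) :=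
    calc (1 - τ) ^ 2 * N * ((2 ^ n) ^ 2 * N) = ((1 - τ) * 2 ^ n * N) ^ 2 := by ring
      _ ≤ A * (3 * (2 ^ n) ^ 2 * N) := hpz.trans (by gcongr)
      _ = 3 * A * ((2 ^ n) ^ 2 * N) := by ring
  rw [div_mul_eq_mul_div, div_le_iff₀ three_pos]
  linarith [le_of_mul_le_mul_right key (by positivity)]

theorem poly3_add_linear (c : Coeff3 n) (z x : Fin n → ZMod 2) :
    poly3 c x + ∑ i, z i * x i = poly3 (c + (z, 0, 0)) x := by
  rw [poly3_eq_dot, poly3_eq_dot, dot_add_left]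
  simp only [dot, zero_dotProduct, add_zero]
  rfl

theorem card_filter_gap_shift (P : ℤ → Prop) [DecidablePred P] :
    #{p : (Fin n → ZMod 2) × Coeff3 n | P (gap fun x => poly3 p.2 x + ∑ i, p.1 i * x i)}
      = 2 ^ n * #{c : Coeff3 n | P (gap (poly3 c))} := by
  have hshift (s : Coeff3 n) :
      #{c | P (gap (poly3 (c + s)))} = #{c : Coeff3 n | P (gap (poly3 c))} := by
    simp only [card_filter]
    exact Fintype.sum_equiv (Equiv.addRight s) _ _ fun _ => rfl
  simp only [poly3_add_linear]
  rw [card_filter, Fintype.sum_prod_type]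
  simp only [← card_filter, hshift, sum_const, card_univ, Fintype.card_fun, ZMod.card,
    Fintype.card_fin, smul_eq_mul]

end Coeff3

theorem anticoncentration_deg3_general (n : ℕ)
    (τ : ℝ) (hτ0 : 0 < τ) (hτ1 : τ < 1) :
    ((1 - τ) ^ 2 / 3) * (2 ^ n * (Fintype.card (Coeff3 n) : ℝ))
      ≤ ((Finset.univ.filter
          (fun p : (Fin n → ZMod 2) × Coeff3 n =>
            τ * 2 ^ n ≤
              ((gap (fun x => poly3 p.2 x + ∑ i, p.1 i * x i) : ℝ)) ^ 2)).card
          : ℝ) := by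
  rw [Coeff3.card_filter_gap_shift fun g : ℤ => τ * 2 ^ n ≤ (g : ℝ) ^ 2, Nat.cast_mul,
    Nat.cast_pow, Nat.cast_ofNat, mul_left_comm]
  exact mul_le_mul_of_nonneg_left (Coeff3.card_filter_gap_poly3_sq_ge hτ0.le hτ1.le)
    (by positivity)

/-- Anti-concentration for random degree-3 polynomials over `𝔽₂`: for
`0 < τ < 1`, the number of pairs `(z, f)` of an `n`-bit string and a degree-3
polynomial (i.e. a coefficient tuple) with `gap(f_z)² ≥ τ·2ⁿ` is at least
`((1−τ)²/3)·2ⁿ·|C|`; equivalently, for uniformly random `(z, f)`,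
`Pr[gap(f_z)²/2^{2n} ≥ τ/2ⁿ] ≥ (1−τ)²/3`. -/
theorem anticoncentration_deg3 (n : ℕ) (hn : 1 ≤ n)
    (τ : ℝ) (hτ0 : 0 < τ) (hτ1 : τ < 1) :
    ((1 - τ) ^ 2 / 3) * (2 ^ n * (Fintype.card (Coeff3 n) : ℝ))
      ≤ ((Finset.univ.filter
          (fun p : (Fin n → ZMod 2) × Coeff3 n =>
            τ * 2 ^ n ≤
              ((gap (fun x => poly3 p.2 x + ∑ i, p.1 i * x i) : ℝ)) ^ 2)).card
          : ℝ) :=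
  anticoncentration_deg3_general n τ hτ0 hτ1
end

section
/- (Anti-concentration for random degree-2 polynomials plus a fixed function.) Let n ≥ 1, let g : 𝔽₂ⁿ → 𝔽₂ be an arbitrary fixed function, and let 0 < τ < 1. Choose z ∈ 𝔽₂ⁿ uniformly at random and choose an n-variable degree-2 polynomial f over 𝔽₂ uniformly at random (i.e., all coefficients α_i, β_{i,j} uniform and independent in 𝔽₂). Then Pr_{z,f}[ gap((f+g)_z)²/2^{2n} ≥ τ/2ⁿ ] ≥ (1−τ)²/3; equivalently, the number of pairs (z, f) with gap((f+g)_z)² ≥ τ·2ⁿ is at least ((1−τ)²/3)·2ⁿ·|C|, where C is the set of all coefficient tuples. -/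
/-- The set `C` of coefficient tuples of an `n`-variable degree-2 polynomial
over `𝔽₂`: linear coefficients `α_i` and quadratic coefficients `β_{i,j}`
for `i > j`. -/
abbrev Coeff2 (n : ℕ) :=
  (Fin n → ZMod 2) × ({p : Fin n × Fin n // p.2 < p.1} → ZMod 2)

/-- The degree-2 polynomial
`f(x) = Σ_i α_i x_i + Σ_{i>j} β_{i,j} x_i x_j`
determined by a coefficient tuple. -/
def poly2 {n : ℕ} (c : Coeff2 n) (x : Fin n → ZMod 2) : ZMod 2 :=
  (∑ i, c.1 i * x i) +
  (∑ p : {p : Fin n × Fin n // p.2 < p.1}, c.2 p * (x p.1.1 * x p.1.2))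

noncomputable def chi (a : ZMod 2) : ℝ := if a = 0 then 1 else -1

lemma zmod2_cases : ∀ a : ZMod 2, a = 0 ∨ a = 1 := by decide

lemma chi_zero : chi 0 = 1 := by simp [chi]

lemma chi_one : chi 1 = -1 := by
  have h : (1 : ZMod 2) ≠ 0 := by decide
  simp [chi, h]

lemma chi_add (a b : ZMod 2) : chi (a + b) = chi a * chi b := by
  rcases zmod2_cases a with h | h <;> rcases zmod2_cases b with h' | h' <;> subst h <;> subst h'
  · rw [add_zero, chi_zero]; ring
  · rw [zero_add, chi_zero]; ring
  · rw [add_zero, chi_zero]; ring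
  · rw [show (1 + 1 : ZMod 2) = 0 from by decide, chi_zero, chi_one]; ring

lemma chi_le_one (a : ZMod 2) : chi a ≤ 1 := by
  rcases zmod2_cases a with h | h <;> subst h <;> simp [chi_zero, chi_one]


lemma gap_cast {n : ℕ} (F : (Fin n → ZMod 2) → ZMod 2) :
    ((gap F : ℤ) : ℝ) = ∑ x : Fin n → ZMod 2, chi (F x) := by
  unfold gap chi
  push_cast [apply_ite]
  norm_num

lemma zmod2_ne_zero : ∀ a : ZMod 2, a ≠ 0 → a = 1 := by decide

lemma sum_eq_zero_of_flip {α : Type*} [Fintype α] (f : α → ℝ) (e : α ≃ α)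
    (h : ∀ a, f (e a) = - f a) : ∑ a, f a = 0 := by
  have h1 : ∑ a, f (e a) = ∑ a, f a := Equiv.sum_comp e f
  have h2 : ∑ a, f (e a) = - ∑ a, f a := by simp [h]
  linarith

lemma chi_one_add (a : ZMod 2) : chi (1 + a) = - chi a := by
  rw [chi_add, chi_one]; ring

lemma sum_chi_eq (n : ℕ) (t : Fin n → ZMod 2)
    (s : {p : Fin n × Fin n // p.2 < p.1} → ZMod 2) :
    ∑ c : Coeff2 n, chi ((∑ i, c.1 i * t i) + ∑ p, c.2 p * s p) =
      if t = 0 ∧ s = 0 then (Fintype.card (Coeff2 n) : ℝ) else 0 := by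
  by_cases h : t = 0 ∧ s = 0
  · obtain ⟨ht, hs⟩ := h
    subst ht; subst hs
    rw [if_pos ⟨rfl, rfl⟩]
    simp [chi_zero]
  · rw [if_neg h]
    rw [not_and_or] at h
    rcases h with h | h
    · obtain ⟨i₀, hi⟩ := Function.ne_iff.mp h
      have ht1 : t i₀ = 1 := zmod2_ne_zero _ (by simpa using hi)
      refine sum_eq_zero_of_flip _
        ((Equiv.addLeft (Pi.single i₀ (1 : ZMod 2))).prodCongr (Equiv.refl _)) ?_
      intro c
      have key : ∑ i, ((Pi.single i₀ (1 : ZMod 2) : Fin n → ZMod 2) + c.1) i * t i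
          = 1 + ∑ i, c.1 i * t i := by
        have : ∀ i, ((Pi.single i₀ (1 : ZMod 2) : Fin n → ZMod 2) + c.1) i * t i
            = (Pi.single i₀ (1 : ZMod 2) : Fin n → ZMod 2) i * t i + c.1 i * t i := by
          intro i; rw [Pi.add_apply, add_mul]
        rw [Finset.sum_congr rfl fun i _ => this i, Finset.sum_add_distrib]
        congr 1
        rw [Finset.sum_eq_single i₀]
        · rw [Pi.single_eq_same, one_mul, ht1]
        · intro b _ hb; rw [Pi.single_eq_of_ne hb, zero_mul]
        · intro hb; exact absurd (Finset.mem_univ i₀) hb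
      show chi _ = - chi _
      simp only [Equiv.prodCongr_apply, Equiv.coe_addLeft, Equiv.refl_apply, Prod.map]
      rw [key, add_assoc, chi_one_add]
    · obtain ⟨p₀, hp⟩ := Function.ne_iff.mp h
      have hs1 : s p₀ = 1 := zmod2_ne_zero _ (by simpa using hp)
      refine sum_eq_zero_of_flip _
        ((Equiv.refl _).prodCongr (Equiv.addLeft (Pi.single p₀ (1 : ZMod 2)))) ?_
      intro c
      have key : ∑ p, ((Pi.single p₀ (1 : ZMod 2) : {p : Fin n × Fin n // p.2 < p.1} → ZMod 2) + c.2) p * s p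
          = 1 + ∑ p, c.2 p * s p := by
        have : ∀ p, ((Pi.single p₀ (1 : ZMod 2) : {p : Fin n × Fin n // p.2 < p.1} → ZMod 2) + c.2) p * s p
            = (Pi.single p₀ (1 : ZMod 2) : {p : Fin n × Fin n // p.2 < p.1} → ZMod 2) p * s p + c.2 p * s p := by
          intro p; rw [Pi.add_apply, add_mul]
        rw [Finset.sum_congr rfl fun p _ => this p, Finset.sum_add_distrib]
        congr 1
        rw [Finset.sum_eq_single p₀]
        · rw [Pi.single_eq_same, one_mul, hs1]
        · intro b _ hb; rw [Pi.single_eq_of_ne hb, zero_mul]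
        · intro hb; exact absurd (Finset.mem_univ p₀) hb
      show chi _ = - chi _
      simp only [Equiv.prodCongr_apply, Equiv.coe_addLeft, Equiv.refl_apply, Prod.map]
      rw [key, add_comm (∑ i, c.1 i * t i), add_assoc, chi_one_add, add_comm]

lemma zmod2_add_eq_zero : ∀ a b : ZMod 2, a + b = 0 ↔ a = b := by decide

lemma poly2_add {n : ℕ} (c : Coeff2 n) (x y : Fin n → ZMod 2) :
    poly2 c x + poly2 c y =
      (∑ i, c.1 i * (x i + y i)) +
      ∑ p : {p : Fin n × Fin n // p.2 < p.1},
        c.2 p * (x p.1.1 * x p.1.2 + y p.1.1 * y p.1.2) := by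
  unfold poly2
  simp only [mul_add, Finset.sum_add_distrib]
  abel

lemma sum_sq (n : ℕ) (g : (Fin n → ZMod 2) → ZMod 2) :
    ∑ c : Coeff2 n, (∑ x : Fin n → ZMod 2, chi (poly2 c x + g x))^2
      = 2^n * (Fintype.card (Coeff2 n) : ℝ) := by
  have expand : ∀ c : Coeff2 n,
      (∑ x : Fin n → ZMod 2, chi (poly2 c x + g x))^2
        = ∑ x : Fin n → ZMod 2, ∑ y : Fin n → ZMod 2,
            chi ((∑ i, c.1 i * (x i + y i)) +
              ∑ p : {p : Fin n × Fin n // p.2 < p.1},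
                c.2 p * (x p.1.1 * x p.1.2 + y p.1.1 * y p.1.2)) *
              chi (g x + g y) := by
    intro c
    rw [sq, Finset.sum_mul_sum]
    refine Finset.sum_congr rfl fun x _ => Finset.sum_congr rfl fun y _ => ?_
    rw [← chi_add, ← chi_add, ← poly2_add]
    congr 1
    abel
  simp only [expand]
  have hin : ∀ x y : Fin n → ZMod 2,
      ∑ c : Coeff2 n, chi ((∑ i, c.1 i * (x i + y i)) +
        ∑ p : {p : Fin n × Fin n // p.2 < p.1},
          c.2 p * (x p.1.1 * x p.1.2 + y p.1.1 * y p.1.2))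
      = if (fun i => x i + y i) = 0 ∧
          (fun p : {p : Fin n × Fin n // p.2 < p.1} =>
            x p.1.1 * x p.1.2 + y p.1.1 * y p.1.2) = 0
        then (Fintype.card (Coeff2 n) : ℝ) else 0 :=
    fun x y => sum_chi_eq n _ _
  have hswap : ∀ x : Fin n → ZMod 2,
      ∑ y : Fin n → ZMod 2, ∑ c : Coeff2 n,
        chi ((∑ i, c.1 i * (x i + y i)) +
          ∑ p : {p : Fin n × Fin n // p.2 < p.1},
            c.2 p * (x p.1.1 * x p.1.2 + y p.1.1 * y p.1.2)) *
          chi (g x + g y)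
      = (Fintype.card (Coeff2 n) : ℝ) := by
    intro x
    have : ∀ y : Fin n → ZMod 2,
        (∑ c : Coeff2 n, chi ((∑ i, c.1 i * (x i + y i)) +
          ∑ p : {p : Fin n × Fin n // p.2 < p.1},
            c.2 p * (x p.1.1 * x p.1.2 + y p.1.1 * y p.1.2)) *
          chi (g x + g y))
        = if x = y then (Fintype.card (Coeff2 n) : ℝ) * chi (g x + g y) else 0 := by
      intro y
      rw [← Finset.sum_mul, hin x y]
      by_cases hxy : x = y
      · subst hxy
        rw [if_pos, if_pos rfl]
        constructor
        · funext i; rw [Pi.zero_apply, zmod2_add_eq_zero]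
        · funext p; rw [Pi.zero_apply, zmod2_add_eq_zero]
      · rw [if_neg, if_neg hxy, zero_mul]
        rintro ⟨h1, -⟩
        apply hxy
        funext i
        have := congrFun h1 i
        rw [Pi.zero_apply, zmod2_add_eq_zero] at this
        exact this
    rw [Finset.sum_congr rfl fun y _ => this y, Finset.sum_ite_eq]
    rw [if_pos (Finset.mem_univ x)]
    rw [show g x + g x = 0 from (zmod2_add_eq_zero _ _).mpr rfl, chi_zero, mul_one]
  rw [Finset.sum_comm]
  have hswap2 : ∀ x : Fin n → ZMod 2,
      ∑ c : Coeff2 n, ∑ y : Fin n → ZMod 2,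
        chi ((∑ i, c.1 i * (x i + y i)) +
          ∑ p : {p : Fin n × Fin n // p.2 < p.1},
            c.2 p * (x p.1.1 * x p.1.2 + y p.1.1 * y p.1.2)) *
          chi (g x + g y)
      = (Fintype.card (Coeff2 n) : ℝ) := by
    intro x
    rw [Finset.sum_comm]
    exact hswap x
  rw [Finset.sum_congr rfl fun x _ => hswap2 x, Finset.sum_const, Finset.card_univ]
  rw [nsmul_eq_mul]
  congr 1
  simp [Fintype.card_fun]
section FOUR
open Finset

lemma poly2_add4 {n : ℕ} (c : Coeff2 n) (x y u v : Fin n → ZMod 2) :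
    poly2 c x + poly2 c y + poly2 c u + poly2 c v =
      (∑ i, c.1 i * (x i + y i + u i + v i)) +
      ∑ p : {p : Fin n × Fin n // p.2 < p.1},
        c.2 p * (x p.1.1 * x p.1.2 + y p.1.1 * y p.1.2 +
          u p.1.1 * u p.1.2 + v p.1.1 * v p.1.2) := by
  unfold poly2
  simp only [mul_add, Finset.sum_add_distrib]
  abel

lemma sum_pow_four {α : Type*} [Fintype α] (f : α → ℝ) :
    (∑ x, f x)^4 = ∑ q : α × α × α × α,
      f q.1 * (f q.2.1 * (f q.2.2.1 * f q.2.2.2)) := by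
  simp only [Fintype.sum_prod_type]
  rw [show (∑ x, f x)^4
      = (∑ x, f x) * ((∑ x, f x) * ((∑ x, f x) * (∑ x, f x))) from by ring]
  simp only [Finset.sum_mul, Finset.mul_sum]
  refine Finset.sum_congr rfl fun x _ => Finset.sum_congr rfl fun y _ =>
    Finset.sum_congr rfl fun u _ => Finset.sum_congr rfl fun v _ => by ring

lemma zmod2_four_eq_zero : ∀ a b c d : ZMod 2, a + b + c + d = 0 ↔ d = a + b + c := by
  decide

lemma zmod2_quad_iff : ∀ xi xj yi yj ui uj : ZMod 2,
    (xi*xj + yi*yj + ui*uj + (xi+yi+ui)*(xj+yj+uj) = 0 ↔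
      (xi+yi)*(xj+uj) = (xj+yj)*(xi+ui)) := by decide

lemma zmod2_mul_eq_one : ∀ a b : ZMod 2, a * b = 1 → b = 1 := by decide

lemma zmod2_cancel : ∀ a b c : ZMod 2, a + b = a + c ↔ b = c := by decide

/-- the key combinatorial implication -/
lemma cond_implies {n : ℕ} (x y u v : Fin n → ZMod 2)
    (h1 : (fun i => x i + y i + u i + v i) = 0)
    (h2 : (fun p : {p : Fin n × Fin n // p.2 < p.1} =>
      x p.1.1 * x p.1.2 + y p.1.1 * y p.1.2 +
        u p.1.1 * u p.1.2 + v p.1.1 * v p.1.2) = 0) :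
    v = (fun i => x i + y i + u i) ∧ (y = x ∨ u = x ∨ y = u) := by
  have hv : ∀ i, v i = x i + y i + u i := by
    intro i
    have := congrFun h1 i
    rw [Pi.zero_apply, zmod2_four_eq_zero] at this
    exact this
  set a : Fin n → ZMod 2 := fun i => x i + y i with ha
  set b : Fin n → ZMod 2 := fun i => x i + u i with hb
  have hq : ∀ i j : Fin n, a i * b j = a j * b i := by
    have base : ∀ p : {p : Fin n × Fin n // p.2 < p.1},
        a p.1.1 * b p.1.2 = a p.1.2 * b p.1.1 := by
      intro p
      have := congrFun h2 p
      rw [Pi.zero_apply, hv p.1.1, hv p.1.2] at this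
      exact (zmod2_quad_iff _ _ _ _ _ _).mp this
    intro i j
    rcases lt_trichotomy i j with h | h | h
    · exact (base ⟨(j, i), h⟩).symm
    · subst h; rfl
    · exact base ⟨(i, j), h⟩
  refine ⟨funext hv, ?_⟩
  by_cases hA : ∀ i, a i = 0
  · left; funext i
    have := hA i
    rw [ha] at this
    have h' := (zmod2_add_eq_zero (x i) (y i)).mp this
    exact h'.symm
  · by_cases hB : ∀ i, b i = 0
    · right; left; funext i
      have := hB i
      rw [hb] at this
      exact ((zmod2_add_eq_zero (x i) (u i)).mp this).symm
    · right; right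
      push_neg at hA hB
      obtain ⟨i₀, hi₀⟩ := hA
      obtain ⟨j₀, hj₀⟩ := hB
      have hai : a i₀ = 1 := zmod2_ne_zero _ hi₀
      have hbj : b j₀ = 1 := zmod2_ne_zero _ hj₀
      have hbi : b i₀ = 1 := by
        have h := hq j₀ i₀
        rw [hbj, mul_one, hai] at h
        exact zmod2_mul_eq_one _ _ h
      have hab : ∀ k, a k = b k := by
        intro k
        have := hq i₀ k
        rw [hai, one_mul, hbi, mul_one] at this
        exact this.symm
      funext k
      have := hab k
      rw [ha, hb] at this
      exact (zmod2_cancel (x k) (y k) (u k)).mp this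
end FOUR

lemma chi_add4 (A B C D : ZMod 2) :
    chi A * (chi B * (chi C * chi D)) = chi (A + B + C + D) := by
  rw [chi_add, chi_add, chi_add]; ring

lemma ite_le_ite {P Q : Prop} [Decidable P] [Decidable Q] {M : ℝ} (hM : 0 ≤ M)
    (h : P → Q) : (if P then M else 0) ≤ (if Q then M else 0) := by
  by_cases hP : P
  · rw [if_pos hP, if_pos (h hP)]
  · rw [if_neg hP]
    by_cases hQ : Q <;> simp [hQ, hM]

lemma ite_nonneg' {P : Prop} [Decidable P] {M : ℝ} (hM : 0 ≤ M) :
    0 ≤ (if P then M else 0) := by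
  by_cases hP : P <;> simp [hP, hM]

lemma ite_or3_le {P Q R : Prop} [Decidable P] [Decidable Q] [Decidable R] {M : ℝ}
    (hM : 0 ≤ M) :
    (if P ∨ Q ∨ R then M else 0)
      ≤ (if P then M else 0) + (if Q then M else 0) + (if R then M else 0) := by
  by_cases hP : P <;> by_cases hQ : Q <;> by_cases hR : R <;>
    simp [hP, hQ, hR] <;> linarith

lemma card_fun2 (n : ℕ) : Fintype.card (Fin n → ZMod 2) = 2^n := by
  simp [Fintype.card_fun]

set_option maxHeartbeats 2000000 in
lemma sum_four_le (n : ℕ) (g : (Fin n → ZMod 2) → ZMod 2) :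
    ∑ c : Coeff2 n, (∑ x : Fin n → ZMod 2, chi (poly2 c x + g x))^4
      ≤ 3 * 2^(2*n) * (Fintype.card (Coeff2 n) : ℝ) := by
  classical
  set M : ℝ := (Fintype.card (Coeff2 n) : ℝ) with hMdef
  have hM0 : 0 ≤ M := Nat.cast_nonneg _
  have expand : ∀ c : Coeff2 n,
      (∑ x : Fin n → ZMod 2, chi (poly2 c x + g x))^4
        = ∑ q : (Fin n → ZMod 2) × (Fin n → ZMod 2) × (Fin n → ZMod 2) × (Fin n → ZMod 2),
            chi ((∑ i, c.1 i * (q.1 i + q.2.1 i + q.2.2.1 i + q.2.2.2 i)) +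
              ∑ p : {p : Fin n × Fin n // p.2 < p.1},
                c.2 p * (q.1 p.1.1 * q.1 p.1.2 + q.2.1 p.1.1 * q.2.1 p.1.2 +
                  q.2.2.1 p.1.1 * q.2.2.1 p.1.2 + q.2.2.2 p.1.1 * q.2.2.2 p.1.2)) *
              chi (g q.1 + g q.2.1 + g q.2.2.1 + g q.2.2.2) := by
    intro c
    rw [sum_pow_four]
    refine Finset.sum_congr rfl fun q _ => ?_
    rw [chi_add4, ← chi_add, ← poly2_add4]
    congr 1
    abel
  rw [Finset.sum_congr rfl fun c _ => expand c, Finset.sum_comm]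
  have hin : ∀ q : (Fin n → ZMod 2) × (Fin n → ZMod 2) × (Fin n → ZMod 2) × (Fin n → ZMod 2),
      (∑ c : Coeff2 n,
        chi ((∑ i, c.1 i * (q.1 i + q.2.1 i + q.2.2.1 i + q.2.2.2 i)) +
          ∑ p : {p : Fin n × Fin n // p.2 < p.1},
            c.2 p * (q.1 p.1.1 * q.1 p.1.2 + q.2.1 p.1.1 * q.2.1 p.1.2 +
              q.2.2.1 p.1.1 * q.2.2.1 p.1.2 + q.2.2.2 p.1.1 * q.2.2.2 p.1.2)) *
          chi (g q.1 + g q.2.1 + g q.2.2.1 + g q.2.2.2))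
      = (if (fun i => q.1 i + q.2.1 i + q.2.2.1 i + q.2.2.2 i) = 0 ∧
          (fun p : {p : Fin n × Fin n // p.2 < p.1} =>
            q.1 p.1.1 * q.1 p.1.2 + q.2.1 p.1.1 * q.2.1 p.1.2 +
              q.2.2.1 p.1.1 * q.2.2.1 p.1.2 + q.2.2.2 p.1.1 * q.2.2.2 p.1.2) = 0
          then M else 0) * chi (g q.1 + g q.2.1 + g q.2.2.1 + g q.2.2.2) := by
    intro q
    rw [← Finset.sum_mul]
    congr 1
    exact sum_chi_eq n _ _
  rw [Finset.sum_congr rfl fun q _ => hin q]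
  have step1 : ∀ q : (Fin n → ZMod 2) × (Fin n → ZMod 2) × (Fin n → ZMod 2) × (Fin n → ZMod 2),
      (if (fun i => q.1 i + q.2.1 i + q.2.2.1 i + q.2.2.2 i) = 0 ∧
          (fun p : {p : Fin n × Fin n // p.2 < p.1} =>
            q.1 p.1.1 * q.1 p.1.2 + q.2.1 p.1.1 * q.2.1 p.1.2 +
              q.2.2.1 p.1.1 * q.2.2.1 p.1.2 + q.2.2.2 p.1.1 * q.2.2.2 p.1.2) = 0
          then M else 0) * chi (g q.1 + g q.2.1 + g q.2.2.1 + g q.2.2.2)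
      ≤ (if q.2.2.2 = (fun i => q.1 i + q.2.1 i + q.2.2.1 i) ∧
          (q.2.1 = q.1 ∨ q.2.2.1 = q.1 ∨ q.2.1 = q.2.2.1) then M else 0) := by
    intro q
    refine le_trans (mul_le_of_le_one_right (ite_nonneg' hM0) (chi_le_one _)) ?_
    exact ite_le_ite hM0 (fun h => cond_implies q.1 q.2.1 q.2.2.1 q.2.2.2 h.1 h.2)
  refine le_trans (Finset.sum_le_sum fun q _ => step1 q) ?_
  simp only [Fintype.sum_prod_type]
  have hv : ∀ x y u : Fin n → ZMod 2,
      (∑ v : Fin n → ZMod 2,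
        if v = (fun i => x i + y i + u i) ∧ (y = x ∨ u = x ∨ y = u) then M else 0)
      = if (y = x ∨ u = x ∨ y = u) then M else 0 := by
    intro x y u
    by_cases hD : y = x ∨ u = x ∨ y = u
    · simp only [hD, and_true]
      rw [Finset.sum_ite_eq' Finset.univ (fun i => x i + y i + u i) (fun _ => M)]
      simp
    · simp [hD]
  have hu : ∀ x y : Fin n → ZMod 2,
      (∑ u : Fin n → ZMod 2, if (y = x ∨ u = x ∨ y = u) then M else 0)
      ≤ (2:ℝ)^n * (if y = x then M else 0) + M + M := by
    intro x y
    refine le_trans (Finset.sum_le_sum fun u _ => ite_or3_le hM0) ?_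
    rw [Finset.sum_add_distrib, Finset.sum_add_distrib]
    rw [Finset.sum_const, Finset.card_univ, card_fun2, nsmul_eq_mul]
    push_cast
    rw [Finset.sum_ite_eq' Finset.univ x (fun _ => M)]
    rw [Finset.sum_ite_eq Finset.univ y (fun _ => M)]
    simp
  have hy : ∀ x : Fin n → ZMod 2,
      (∑ y : Fin n → ZMod 2, ((2:ℝ)^n * (if y = x then M else 0) + M + M))
      = 3 * 2^n * M := by
    intro x
    rw [Finset.sum_add_distrib, Finset.sum_add_distrib]
    rw [← Finset.mul_sum, Finset.sum_ite_eq' Finset.univ x (fun _ => M)]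
    simp only [Finset.mem_univ, if_true, Finset.sum_const, Finset.card_univ, card_fun2,
      nsmul_eq_mul]
    push_cast
    ring
  calc ∑ x : Fin n → ZMod 2, ∑ y : Fin n → ZMod 2, ∑ u : Fin n → ZMod 2,
        ∑ v : Fin n → ZMod 2,
          (if v = (fun i => x i + y i + u i) ∧ (y = x ∨ u = x ∨ y = u) then M else 0)
      = ∑ x : Fin n → ZMod 2, ∑ y : Fin n → ZMod 2, ∑ u : Fin n → ZMod 2,
          (if (y = x ∨ u = x ∨ y = u) then M else 0) := by
        refine Finset.sum_congr rfl fun x _ => Finset.sum_congr rfl fun y _ =>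
          Finset.sum_congr rfl fun u _ => hv x y u
    _ ≤ ∑ x : Fin n → ZMod 2, ∑ y : Fin n → ZMod 2,
          ((2:ℝ)^n * (if y = x then M else 0) + M + M) := by
        refine Finset.sum_le_sum fun x _ => Finset.sum_le_sum fun y _ => hu x y
    _ = ∑ x : Fin n → ZMod 2, 3 * 2^n * M := by
        exact Finset.sum_congr rfl fun x _ => hy x
    _ = 3 * 2^(2*n) * M := by
        rw [Finset.sum_const, Finset.card_univ, card_fun2, nsmul_eq_mul]
        push_cast
        ring

lemma zmod2_addw : ∀ a w b : ZMod 2, ((a + w) + b) + w = a + b := by decide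

lemma poly2_shift {n : ℕ} (c : Coeff2 n) (z x : Fin n → ZMod 2) :
    poly2 ((c.1 + z, c.2) : Coeff2 n) x = poly2 c x + ∑ i, z i * x i := by
  unfold poly2
  simp only [Pi.add_apply, add_mul, Finset.sum_add_distrib]
  abel

set_option maxHeartbeats 1000000 in
/-- Anti-concentration for a random degree-2 polynomial over `𝔽₂` plus an
arbitrary fixed function `g`: for `0 < τ < 1`, the number of pairs `(z, f)`
of an `n`-bit string and a degree-2 polynomial (i.e. a coefficient tuple)
with `gap((f+g)_z)² ≥ τ·2ⁿ` is at least `((1−τ)²/3)·2ⁿ·|C|`; equivalently,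
for uniformly random `(z, f)`,
`Pr[gap((f+g)_z)²/2^{2n} ≥ τ/2ⁿ] ≥ (1−τ)²/3`. -/
theorem anticoncentration_deg2_plus_fixed (n : ℕ) (hn : 1 ≤ n)
    (g : (Fin n → ZMod 2) → ZMod 2)
    (τ : ℝ) (hτ0 : 0 < τ) (hτ1 : τ < 1) :
    ((1 - τ) ^ 2 / 3) * (2 ^ n * (Fintype.card (Coeff2 n) : ℝ))
      ≤ ((Finset.univ.filter
          (fun p : (Fin n → ZMod 2) × Coeff2 n =>
            τ * 2 ^ n ≤
              ((gap (fun x =>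
                (poly2 p.2 x + g x) + ∑ i, p.1 i * x i) : ℝ)) ^ 2)).card
          : ℝ) := by
  classical
  set M : ℝ := (Fintype.card (Coeff2 n) : ℝ) with hMdef
  have hM0 : 0 < M := by
    rw [hMdef]; exact_mod_cast Fintype.card_pos
  set Gr : Coeff2 n → ℝ := fun c => ∑ x : Fin n → ZMod 2, chi (poly2 c x + g x) with hGr
  set A : Finset (Coeff2 n) := Finset.univ.filter (fun c => τ * 2^n ≤ (Gr c)^2) with hA
  set P : (Fin n → ZMod 2) × Coeff2 n → Prop := fun p =>
    τ * 2 ^ n ≤ ((gap (fun x => (poly2 p.2 x + g x) + ∑ i, p.1 i * x i) : ℝ)) ^ 2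
    with hP
  -- the key pointwise identity
  have hkey : ∀ (z : Fin n → ZMod 2) (c : Coeff2 n),
      P (z, ((c.1 + z, c.2) : Coeff2 n)) ↔ c ∈ A := by
    intro z c
    have harg : (fun x => (poly2 ((c.1 + z, c.2) : Coeff2 n) x + g x) + ∑ i, z i * x i)
        = fun x => poly2 c x + g x := by
      funext x
      rw [poly2_shift]
      exact zmod2_addw _ _ _
    rw [hP, hA]
    simp only [Finset.mem_filter, Finset.mem_univ, true_and]
    rw [harg, gap_cast]
  -- the card of the big filter is 2^n * A.card
  have hcanc : ∀ a b : Fin n → ZMod 2, (a + b) + b = a := by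
    intro a b; funext i
    exact (by decide : ∀ a b : ZMod 2, (a + b) + b = a) _ _
  have hcard : (Finset.univ.filter P).card = 2^n * A.card := by
    have h1 : (Finset.univ.filter P).card
        = (Finset.univ.filter (fun p : (Fin n → ZMod 2) × Coeff2 n => p.2 ∈ A)).card := by
      refine Finset.card_bij' (fun p _ => (p.1, ((p.2.1 + p.1, p.2.2) : Coeff2 n)))
        (fun p _ => (p.1, ((p.2.1 + p.1, p.2.2) : Coeff2 n))) ?_ ?_ ?_ ?_
      · intro p hp
        rw [Finset.mem_filter] at hp ⊢
        refine ⟨Finset.mem_univ _, ?_⟩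
        show ((p.2.1 + p.1, p.2.2) : Coeff2 n) ∈ A
        refine (hkey p.1 ((p.2.1 + p.1, p.2.2) : Coeff2 n)).mp ?_
        show P (p.1, ((p.2.1 + p.1) + p.1, p.2.2))
        rw [hcanc]
        exact hp.2
      · intro p hp
        rw [Finset.mem_filter] at hp ⊢
        refine ⟨Finset.mem_univ _, ?_⟩
        show P (p.1, (p.2.1 + p.1, p.2.2))
        exact (hkey p.1 p.2).mpr hp.2
      · intro p _
        refine Prod.ext rfl (Prod.ext ?_ rfl)
        exact hcanc _ _
      · intro p _
        refine Prod.ext rfl (Prod.ext ?_ rfl)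
        exact hcanc _ _
    rw [h1]
    have h4 : (Finset.univ.filter (fun p : (Fin n → ZMod 2) × Coeff2 n => p.2 ∈ A))
        = Finset.univ ×ˢ A := by
      ext p
      simp [Finset.mem_product]
    rw [h4, Finset.card_product, Finset.card_univ, card_fun2]
  -- Paley–Zygmund
  have hS : ∑ c : Coeff2 n, (Gr c)^2 = 2^n * M := sum_sq n g
  have hQ : ∑ c : Coeff2 n, (Gr c)^4 ≤ 3 * 2^(2*n) * M := sum_four_le n g
  have hpow : (0:ℝ) < 2^n := by positivity
  -- lower bound on ∑_{c ∈ A} Gr²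
  have h1 : (1 - τ) * (2^n * M) ≤ ∑ c ∈ A, (Gr c)^2 := by
    have hsplit := Finset.sum_filter_add_sum_filter_not Finset.univ
      (fun c => τ * 2^n ≤ (Gr c)^2) (fun c => (Gr c)^2)
    have hnotle : ∑ c ∈ Finset.univ.filter (fun c => ¬ (τ * 2^n ≤ (Gr c)^2)), (Gr c)^2
        ≤ τ * 2^n * M := by
      calc ∑ c ∈ Finset.univ.filter (fun c => ¬ (τ * 2^n ≤ (Gr c)^2)), (Gr c)^2
          ≤ ∑ _c ∈ Finset.univ.filter (fun c => ¬ (τ * 2^n ≤ (Gr c)^2)), τ * 2^n := by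
            refine Finset.sum_le_sum fun c hc => ?_
            rw [Finset.mem_filter] at hc
            exact le_of_not_ge hc.2
        _ = (Finset.univ.filter (fun c => ¬ (τ * 2^n ≤ (Gr c)^2))).card * (τ * 2^n) := by
            rw [Finset.sum_const, nsmul_eq_mul]
        _ ≤ M * (τ * 2^n) := by
            refine mul_le_mul_of_nonneg_right ?_ (by positivity)
            rw [hMdef]
            exact_mod_cast Finset.card_le_univ _
        _ = τ * 2^n * M := by ring
    have : ∑ c ∈ A, (Gr c)^2 = 2^n * M
        - ∑ c ∈ Finset.univ.filter (fun c => ¬ (τ * 2^n ≤ (Gr c)^2)), (Gr c)^2 := by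
      rw [hA, ← hS, ← hsplit]; ring
    rw [this]
    nlinarith [hnotle]
  -- Cauchy–Schwarz
  have h2 : (∑ c ∈ A, (Gr c)^2)^2 ≤ (A.card : ℝ) * ∑ c ∈ A, (Gr c)^4 := by
    have := Finset.sum_mul_sq_le_sq_mul_sq A (fun _ => (1:ℝ)) (fun c => (Gr c)^2)
    simpa [← pow_mul] using this
  have h3 : ∑ c ∈ A, (Gr c)^4 ≤ 3 * 2^(2*n) * M := by
    refine le_trans (Finset.sum_le_sum_of_subset_of_nonneg (Finset.subset_univ A)
      (fun c _ _ => by positivity)) hQ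
  -- combine
  have h4 : ((1 - τ) * (2^n * M))^2 ≤ (A.card : ℝ) * (3 * 2^(2*n) * M) := by
    have hnn : 0 ≤ (1 - τ) * (2^n * M) :=
      mul_nonneg (by linarith) (by positivity)
    calc ((1 - τ) * (2^n * M))^2 ≤ (∑ c ∈ A, (Gr c)^2)^2 := by
          exact pow_le_pow_left₀ hnn h1 2
      _ ≤ (A.card : ℝ) * ∑ c ∈ A, (Gr c)^4 := h2
      _ ≤ (A.card : ℝ) * (3 * 2^(2*n) * M) :=
          mul_le_mul_of_nonneg_left h3 (Nat.cast_nonneg _)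
  have hN : ((1 - τ)^2 / 3) * M ≤ (A.card : ℝ) := by
    have h2n : (0:ℝ) < 2^(2*n) := by positivity
    have hexp : ((2:ℝ)^n) * (2:ℝ)^n = 2^(2*n) := by
      rw [← pow_add]; congr 1; ring
    nlinarith [h4, mul_pos h2n hM0, sq_nonneg ((1-τ) * M)]
  -- finish
  have hfin : ((Finset.univ.filter P).card : ℝ) = 2^n * (A.card : ℝ) := by
    rw [hcard]; push_cast; ring
  calc ((1 - τ) ^ 2 / 3) * (2 ^ n * M) = 2^n * (((1 - τ)^2 / 3) * M) := by ring
    _ ≤ 2^n * (A.card : ℝ) := by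
        exact mul_le_mul_of_nonneg_left hN (by positivity)
    _ = ((Finset.univ.filter P).card : ℝ) := hfin.symm
end
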